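/- arXiv:1401.3294 — 10 statements merged into one kernel-verified Lean document; each statement's English description precedes it below -/
import Mathlib

section
/- The additive group of a finite semifield is an elementary abelian p-group for some prime p; that is, every nonzero element of (S,+) has the same prime order p. -/
/-!
Left distributivity makes each left multiplication `y ↦ x ∘ y` an additive endomorphism, so
`n • x = x ∘ (n • 1)`: every element is killed by the additive order `p` of `1`, and
`(m • 1) ∘ (k • 1) = (k * m) • 1`. The latter, with the absence of zero divisors, forces `p`
to be prime (or zero), exactly as for the characteristic of a domain; a nonzero element then
has an additive order dividing the prime `p` and different from `1`.
-/

section LeftDistrib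

variable {S : Type*} [AddCommGroup S] {mul : S → S → S} {one : S}

theorem addOrderOf_dvd_addOrderOf_of_mul_one
    (ldist : ∀ x y z : S, mul x (y + z) = mul x y + mul x z)
    (honeR : ∀ x : S, mul x one = x) (x : S) : addOrderOf x ∣ addOrderOf one := by
  simpa only [AddMonoidHom.mk'_apply, honeR] using
    addOrderOf_map_dvd (AddMonoidHom.mk' (mul x) (ldist x)) one

theorem nsmul_one_mul_nsmul_one (ldist : ∀ x y z : S, mul x (y + z) = mul x y + mul x z)
    (honeR : ∀ x : S, mul x one = x) (m k : ℕ) :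
    mul (m • one) (k • one) = (k * m) • one := by
  simpa only [AddMonoidHom.mk'_apply, honeR, mul_nsmul'] using
    map_nsmul (AddMonoidHom.mk' (mul (m • one)) (ldist _)) k one

theorem addOrderOf_one_prime_or_eq_zero
    (ldist : ∀ x y z : S, mul x (y + z) = mul x y + mul x z)
    (nzd : ∀ x y : S, mul x y = 0 → x = 0 ∨ y = 0) (hone : one ≠ 0)
    (honeR : ∀ x : S, mul x one = x) : (addOrderOf one).Prime ∨ addOrderOf one = 0 := by
  set p := addOrderOf one
  rcases Nat.eq_zero_or_pos p with hp0 | hp0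
  · exact Or.inr hp0
  refine Or.inl (Nat.prime_def.mpr ⟨?_, fun m ⟨k, hk⟩ ↦ ?_⟩)
  · have hp1 : p ≠ 1 := fun h ↦ hone (AddMonoid.addOrderOf_eq_one_iff.mp h)
    omega
  have hmk : mul (m • one) (k • one) = 0 := by
    rw [nsmul_one_mul_nsmul_one ldist honeR, mul_comm, ← hk, addOrderOf_nsmul_eq_zero]
  rcases nzd _ _ hmk with hm | hk0
  · exact Or.inr (Nat.dvd_antisymm ⟨k, hk⟩ (addOrderOf_dvd_of_nsmul_eq_zero hm))
  · have hkp : k = p :=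
      Nat.dvd_antisymm ⟨m, by rw [hk, mul_comm]⟩ (addOrderOf_dvd_of_nsmul_eq_zero hk0)
    rw [hkp] at hk
    exact Or.inl (by nlinarith)

end LeftDistrib

theorem semifield_additive_elementary_abelian_general {S : Type*} [Fintype S] [AddCommGroup S]
    (mul : S → S → S) (one : S)
    (ldist : ∀ x y z : S, mul x (y + z) = mul x y + mul x z)
    (nzd : ∀ x y : S, mul x y = 0 → x = 0 ∨ y = 0)
    (hone : one ≠ 0)
    (honeR : ∀ x : S, mul x one = x) :
    ∃ p : ℕ, p.Prime ∧ ∀ x : S, x ≠ 0 → addOrderOf x = p := by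
  have hp : (addOrderOf one).Prime :=
    (addOrderOf_one_prime_or_eq_zero ldist nzd hone honeR).resolve_right
      (addOrderOf_pos one).ne'
  refine ⟨addOrderOf one, hp, fun x hx ↦ ?_⟩
  have hdvd := addOrderOf_dvd_addOrderOf_of_mul_one ldist honeR x
  exact (hp.eq_one_or_self_of_dvd _ hdvd).resolve_left (mt AddMonoid.addOrderOf_eq_one_iff.mp hx)

/-- The additive group of a finite semifield is an elementary abelian `p`-group:
every nonzero element has the same prime order `p`. -/
theorem semifield_additive_elementary_abelian {S : Type*} [Fintype S] [AddCommGroup S]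
    (mul : S → S → S) (one : S) (hcard : 1 < Fintype.card S)
    (ldist : ∀ x y z : S, mul x (y + z) = mul x y + mul x z)
    (rdist : ∀ x y z : S, mul (x + y) z = mul x z + mul y z)
    (nzd : ∀ x y : S, mul x y = 0 → x = 0 ∨ y = 0)
    (hone : one ≠ 0)
    (honeL : ∀ x : S, mul one x = x) (honeR : ∀ x : S, mul x one = x) :
    ∃ p : ℕ, p.Prime ∧ ∀ x : S, x ≠ 0 → addOrderOf x = p :=
  semifield_additive_elementary_abelian_general mul one ldist nzd hone honeR
end

section
/- Let (S, +, ∘) be a finite semifield of order n. Define a group operation on G = S × S by (x,y) ⋆ (x',y') = (x+x', y+y'+x∘x'). Then G is a group, and the set R = {(x, x∘x) : x ∈ S} is an (n,n,n,1) difference set in G relative to the subgroup N = {(0,y) : y ∈ S}; that is, every element of G ∖ N occurs exactly once as a difference r ⋆ r'⁻¹ with r, r' ∈ R, and no nonidentity element of N occurs as such a difference. -/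
/-!
The quotient `(a, a∘a) ⋆ (b, b∘b)⁻¹` is `(a - b, a∘(a - b))`. For a
first coordinate `u ≠ 0` the map `a ↦ a∘u` is injective (no zero divisors), hence bijective on
the finite set `S`; so `a` is determined by the second coordinate and then `b = a - u`.
For `u = 0` we get `a = b`, and the quotient is the identity.
-/

/-- The group operation `(x,y) ⋆ (x',y') = (x+x', y+y'+x∘x')` on `S × S`. -/
def semifieldStar {S : Type*} [AddCommGroup S] (mul : S → S → S) :
    S × S → S × S → S × S :=
  fun p q => (p.1 + q.1, p.2 + q.2 + mul p.1 q.1)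

/-- The inverse `(x,y)⁻¹ = (−x, −y + x∘x)` for the operation `⋆`. -/
def semifieldInv {S : Type*} [AddCommGroup S] (mul : S → S → S) : S × S → S × S :=
  fun p => (-p.1, -p.2 + mul p.1 p.1)

theorem card_image_graph {S : Type*} [Fintype S] [DecidableEq S] (mul : S → S → S) :
    (Finset.univ.image (fun x : S => (x, mul x x))).card = Fintype.card S := by
  rw [Finset.card_image_of_injective _ fun a b h => (Prod.mk.inj h).1, Finset.card_univ]

section Distributive

variable {S : Type*} [AddCommGroup S] {mul : S → S → S}

theorem mul_zero_of_ldist (ldist : ∀ x y z : S, mul x (y + z) = mul x y + mul x z) (x : S) :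
    mul x 0 = 0 :=
  map_zero (AddMonoidHom.mk' (mul x) (ldist x))

theorem mul_neg_of_ldist (ldist : ∀ x y z : S, mul x (y + z) = mul x y + mul x z) (x y : S) :
    mul x (-y) = -mul x y :=
  map_neg (AddMonoidHom.mk' (mul x) (ldist x)) y

theorem mul_sub_of_ldist (ldist : ∀ x y z : S, mul x (y + z) = mul x y + mul x z) (x y z : S) :
    mul x (y - z) = mul x y - mul x z :=
  map_sub (AddMonoidHom.mk' (mul x) (ldist x)) y z

theorem zero_mul_of_rdist (rdist : ∀ x y z : S, mul (x + y) z = mul x z + mul y z) (x : S) :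
    mul 0 x = 0 :=
  map_zero (AddMonoidHom.mk' (mul · x) (rdist · · x))

theorem neg_mul_of_rdist (rdist : ∀ x y z : S, mul (x + y) z = mul x z + mul y z) (x y : S) :
    mul (-x) y = -mul x y :=
  map_neg (AddMonoidHom.mk' (mul · y) (rdist · · y)) x

theorem sub_mul_of_rdist (rdist : ∀ x y z : S, mul (x + y) z = mul x z + mul y z) (x y z : S) :
    mul (x - y) z = mul x z - mul y z :=
  map_sub (AddMonoidHom.mk' (mul · z) (rdist · · z)) x y

theorem mul_left_injective_of_ne_zero
    (rdist : ∀ x y z : S, mul (x + y) z = mul x z + mul y z)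
    (nzd : ∀ x y : S, mul x y = 0 → x = 0 ∨ y = 0) {u : S} (hu : u ≠ 0) :
    Function.Injective (mul · u) := by
  intro a b hab
  have hdiff : mul (a - b) u = 0 := by
    rw [sub_mul_of_rdist rdist, sub_eq_zero.mpr hab]
  exact sub_eq_zero.mp ((nzd _ _ hdiff).resolve_right hu)

theorem existsUnique_mul_eq_of_ne_zero [Finite S]
    (rdist : ∀ x y z : S, mul (x + y) z = mul x z + mul y z)
    (nzd : ∀ x y : S, mul x y = 0 → x = 0 ∨ y = 0) {u : S} (hu : u ≠ 0) (v : S) :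
    ∃! a, mul a u = v :=
  (Finite.injective_iff_bijective.mp (mul_left_injective_of_ne_zero rdist nzd hu)).existsUnique v

theorem semifieldStar_assoc (ldist : ∀ x y z : S, mul x (y + z) = mul x y + mul x z)
    (rdist : ∀ x y z : S, mul (x + y) z = mul x z + mul y z) (p q r : S × S) :
    semifieldStar mul (semifieldStar mul p q) r = semifieldStar mul p (semifieldStar mul q r) := by
  simp only [semifieldStar, ldist, rdist, Prod.mk.injEq]
  constructor <;> abel

theorem semifieldStar_zero_left (rdist : ∀ x y z : S, mul (x + y) z = mul x z + mul y z)
    (p : S × S) : semifieldStar mul (0, 0) p = p := by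
  simp [semifieldStar, zero_mul_of_rdist rdist]

theorem semifieldStar_zero_right (ldist : ∀ x y z : S, mul x (y + z) = mul x y + mul x z)
    (p : S × S) : semifieldStar mul p (0, 0) = p := by
  simp [semifieldStar, mul_zero_of_ldist ldist]

theorem semifieldStar_semifieldInv (ldist : ∀ x y z : S, mul x (y + z) = mul x y + mul x z)
    (p : S × S) : semifieldStar mul p (semifieldInv mul p) = (0, 0) := by
  simp only [semifieldStar, semifieldInv, mul_neg_of_ldist ldist, Prod.mk.injEq]
  constructor <;> abel

theorem semifieldInv_semifieldStar (rdist : ∀ x y z : S, mul (x + y) z = mul x z + mul y z)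
    (p : S × S) : semifieldStar mul (semifieldInv mul p) p = (0, 0) := by
  simp only [semifieldStar, semifieldInv, neg_mul_of_rdist rdist, Prod.mk.injEq]
  constructor <;> abel

theorem semifieldStar_graph_semifieldInv_graph
    (ldist : ∀ x y z : S, mul x (y + z) = mul x y + mul x z) (a b : S) :
    semifieldStar mul (a, mul a a) (semifieldInv mul (b, mul b b)) = (a - b, mul a (a - b)) := by
  simp only [semifieldStar, semifieldInv, mul_neg_of_ldist ldist, mul_sub_of_ldist ldist,
    Prod.mk.injEq]
  constructor <;> abel

theorem existsUnique_graph_quotient_eq [Finite S]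
    (ldist : ∀ x y z : S, mul x (y + z) = mul x y + mul x z)
    (rdist : ∀ x y z : S, mul (x + y) z = mul x z + mul y z)
    (nzd : ∀ x y : S, mul x y = 0 → x = 0 ∨ y = 0) {g : S × S} (hg : g.1 ≠ 0) :
    ∃! ab : S × S,
      semifieldStar mul (ab.1, mul ab.1 ab.1) (semifieldInv mul (ab.2, mul ab.2 ab.2)) = g := by
  simp only [semifieldStar_graph_semifieldInv_graph ldist]
  obtain ⟨a, ha, ha_unique⟩ := existsUnique_mul_eq_of_ne_zero rdist nzd hg g.2
  refine ⟨(a, a - g.1), by simp [ha], ?_⟩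
  rintro ⟨x, y⟩ hxy
  obtain ⟨hsub, hmul⟩ := Prod.ext_iff.mp hxy
  dsimp only at hsub hmul
  rw [hsub] at hmul
  obtain rfl := ha_unique x hmul
  rw [← hsub, sub_sub_cancel]

end Distributive

open scoped Classical in
theorem semifield_relative_difference_set_general {S : Type*} [Fintype S] [AddCommGroup S]
    (mul : S → S → S)
    (ldist : ∀ x y z : S, mul x (y + z) = mul x y + mul x z)
    (rdist : ∀ x y z : S, mul (x + y) z = mul x z + mul y z)
    (nzd : ∀ x y : S, mul x y = 0 → x = 0 ∨ y = 0) :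
    (∀ p q r : S × S,
        semifieldStar mul (semifieldStar mul p q) r
          = semifieldStar mul p (semifieldStar mul q r)) ∧
    (∀ p : S × S, semifieldStar mul (0, 0) p = p ∧ semifieldStar mul p (0, 0) = p) ∧
    (∀ p : S × S, semifieldStar mul p (semifieldInv mul p) = (0, 0) ∧
        semifieldStar mul (semifieldInv mul p) p = (0, 0)) ∧
    (Finset.univ.image (fun x : S => (x, mul x x))).card = Fintype.card S ∧
    (∀ g : S × S, g.1 ≠ 0 →
        ∃! ab : S × S,
          semifieldStar mul (ab.1, mul ab.1 ab.1)
            (semifieldInv mul (ab.2, mul ab.2 ab.2)) = g) ∧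
    (∀ g : S × S, g.1 = 0 → g ≠ (0, 0) →
        ¬ ∃ ab : S × S,
            semifieldStar mul (ab.1, mul ab.1 ab.1)
              (semifieldInv mul (ab.2, mul ab.2 ab.2)) = g) := by
  refine ⟨semifieldStar_assoc ldist rdist,
    fun p => ⟨semifieldStar_zero_left rdist p, semifieldStar_zero_right ldist p⟩,
    fun p => ⟨semifieldStar_semifieldInv ldist p, semifieldInv_semifieldStar rdist p⟩,
    card_image_graph mul, fun g hg => existsUnique_graph_quotient_eq ldist rdist nzd hg, ?_⟩
  rintro g hg hg_ne ⟨⟨a, b⟩, rfl⟩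
  rw [semifieldStar_graph_semifieldInv_graph ldist] at hg hg_ne
  obtain rfl : a = b := sub_eq_zero.mp hg
  exact hg_ne (by rw [sub_self, mul_zero_of_ldist ldist])

open scoped Classical in
/-- For a finite semifield `(S,+,∘)` of order `n`, the operation `⋆` makes `S × S` a group,
and `R = {(x, x∘x) : x ∈ S}` is an `(n,n,n,1)` difference set relative to
`N = {(0,y) : y ∈ S}`: every element of `G ∖ N` occurs exactly once as a difference
`r ⋆ r'⁻¹` with `r, r' ∈ R`, and no nonidentity element of `N` occurs as such a difference. -/
theorem semifield_relative_difference_set {S : Type*} [Fintype S] [AddCommGroup S]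
    (mul : S → S → S) (one : S) (hcard : 1 < Fintype.card S)
    (ldist : ∀ x y z : S, mul x (y + z) = mul x y + mul x z)
    (rdist : ∀ x y z : S, mul (x + y) z = mul x z + mul y z)
    (nzd : ∀ x y : S, mul x y = 0 → x = 0 ∨ y = 0)
    (hone : one ≠ 0)
    (honeL : ∀ x : S, mul one x = x) (honeR : ∀ x : S, mul x one = x) :
    (∀ p q r : S × S,
        semifieldStar mul (semifieldStar mul p q) r
          = semifieldStar mul p (semifieldStar mul q r)) ∧
    (∀ p : S × S, semifieldStar mul (0, 0) p = p ∧ semifieldStar mul p (0, 0) = p) ∧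
    (∀ p : S × S, semifieldStar mul p (semifieldInv mul p) = (0, 0) ∧
        semifieldStar mul (semifieldInv mul p) p = (0, 0)) ∧
    (Finset.univ.image (fun x : S => (x, mul x x))).card = Fintype.card S ∧
    (∀ g : S × S, g.1 ≠ 0 →
        ∃! ab : S × S,
          semifieldStar mul (ab.1, mul ab.1 ab.1)
            (semifieldInv mul (ab.2, mul ab.2 ab.2)) = g) ∧
    (∀ g : S × S, g.1 = 0 → g ≠ (0, 0) →
        ¬ ∃ ab : S × S,
            semifieldStar mul (ab.1, mul ab.1 ab.1)
              (semifieldInv mul (ab.2, mul ab.2 ab.2)) = g) :=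
  semifield_relative_difference_set_general mul ldist rdist nzd
end

section
/- Let H and N be finite groups of order n, written additively, and let R be a subset of H × N. Then R is an (n,n,n,1) difference set in H × N relative to {0} × N if and only if there exists a planar function f : H → N such that R = {(x, f(x)) : x ∈ H}. -/
/-!
Pairs of points of `R` over the same `x ∈ H` give exactly the differences of `R` in `{0} × N`, so
their absence makes `Prod.fst` injective on `R`, and `#R = #H` then makes `R` the graph of some
`f : H → N`. For a graph, the representations of `(a, b)` as a difference correspond to the
solutions `x` of `f (x + a) - f x = b`; so each `(a, b)` with `a ≠ 0` being represented exactly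
once says that `f` is planar, while differences `(0, b)` with `b ≠ 0` never occur.
-/

open Finset

theorem Fintype.bijective_iff_card_filter_eq_one {α β : Type*} [Fintype α] [DecidableEq β]
    (F : α → β) : Function.Bijective F ↔ ∀ b, #{a | F a = b} = 1 := by
  simp only [Function.bijective_iff_existsUnique, card_eq_one_iff_existsUnique, mem_filter,
    mem_univ, true_and]

section Graph

variable {H N : Type*}

theorem card_eq_card_of_coe_eq_graph [Fintype H] {R : Finset (H × N)} {f : H → N}
    (hR : (R : Set (H × N)) = {p | p.2 = f p.1}) : #R = Fintype.card H := by
  rw [← card_univ]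
  refine card_nbij' Prod.fst (fun x => (x, f x)) (by simp) (fun x _ => ?_) ?_ (fun _ _ => rfl)
  · simp [hR]
  · intro p hp
    rw [hR] at hp
    exact Prod.ext rfl hp.symm

theorem exists_coe_eq_graph_of_injOn_fst [Fintype H] {R : Finset (H × N)}
    (hinj : Set.InjOn Prod.fst (R : Set (H × N))) (hcard : #R = Fintype.card H) :
    ∃ f : H → N, (R : Set (H × N)) = {p | p.2 = f p.1} := by
  classical
  have hsurj : ∀ x : H, ∃ y, (x, y) ∈ R := by
    intro x
    have : R.image Prod.fst = univ := eq_univ_of_card _ (by rw [card_image_of_injOn hinj, hcard])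
    obtain ⟨p, hp, rfl⟩ := mem_image.mp (this ▸ mem_univ x)
    exact ⟨p.2, hp⟩
  choose f hf using hsurj
  refine ⟨f, Set.ext fun p => ⟨fun hp => ?_, fun hp => ?_⟩⟩
  · exact congrArg Prod.snd (hinj hp (hf p.1) rfl)
  · rw [Set.mem_ofPred_eq] at hp
    simpa [← hp] using hf p.1

variable [AddCommGroup H] [AddCommGroup N]

theorem injOn_fst_of_card_filter_sub_eq_zero [DecidableEq H] [DecidableEq N]
    {R : Finset (H × N)}
    (h0 : ∀ g : H × N, g.1 = 0 → g ≠ 0 → #{p ∈ R ×ˢ R | p.1 - p.2 = g} = 0) :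
    Set.InjOn Prod.fst (R : Set (H × N)) := by
  intro p hp q hq hpq
  by_contra hne
  have hempty := card_eq_zero.mp (h0 (p - q) (by simp [hpq]) (sub_ne_zero.mpr hne))
  exact filter_eq_empty_iff.mp hempty (mk_mem_product hp hq) rfl

theorem card_filter_sub_eq_of_coe_eq_graph [Fintype H] [DecidableEq H] [DecidableEq N]
    {R : Finset (H × N)} {f : H → N} (hR : (R : Set (H × N)) = {p | p.2 = f p.1}) (g : H × N) :
    #{p ∈ R ×ˢ R | p.1 - p.2 = g} = #{x | f (x + g.1) - f x = g.2} := by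
  have hmem : ∀ p, p ∈ R ↔ p.2 = f p.1 := fun p => Set.ext_iff.mp hR p
  have hdiff : ∀ p ∈ (({p ∈ R ×ˢ R | p.1 - p.2 = g} : Finset _) : Set ((H × N) × (H × N))),
      p = ((p.2.1 + g.1, f (p.2.1 + g.1)), (p.2.1, f p.2.1)) ∧ f (p.2.1 + g.1) - f p.2.1 = g.2 := by
    rintro ⟨⟨x', y'⟩, ⟨x, y⟩⟩ h
    simp only [coe_filter, mem_product, hmem, Set.mem_ofPred_eq, Prod.ext_iff, Prod.fst_sub,
      Prod.snd_sub] at h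
    obtain ⟨⟨rfl, rfl⟩, hx, hy⟩ := h
    obtain rfl : x' = x + g.1 := sub_eq_iff_eq_add'.mp hx
    exact ⟨rfl, hy⟩
  refine card_nbij' (fun p => p.2.1) (fun x => ((x + g.1, f (x + g.1)), (x, f x)))
    (fun p hp => by simpa using (hdiff p hp).2) (fun x hx => by simp_all [Prod.ext_iff])
    (fun p hp => (hdiff p hp).1.symm) (fun x _ => rfl)

end Graph

open scoped Classical in
theorem rds_iff_planar_general {H N : Type*} [AddCommGroup H] [AddCommGroup N]
    [Fintype H] (n : ℕ) (hH : Fintype.card H = n)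
    (R : Finset (H × N)) :
    (R.card = n ∧
      (∀ g : H × N, g.1 ≠ 0 →
        ((R ×ˢ R).filter (fun p => p.1 - p.2 = g)).card = 1) ∧
      (∀ g : H × N, g.1 = 0 → g ≠ 0 →
        ((R ×ˢ R).filter (fun p => p.1 - p.2 = g)).card = 0)) ↔
    ∃ f : H → N,
      (∀ a : H, a ≠ 0 → Function.Bijective (fun x : H => f (x + a) - f x)) ∧
      (R : Set (H × N)) = {p : H × N | p.2 = f p.1} := by
  subst hH
  constructor
  · rintro ⟨hcard, hone, hzero⟩
    obtain ⟨f, hR⟩ :=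
      exists_coe_eq_graph_of_injOn_fst (injOn_fst_of_card_filter_sub_eq_zero hzero) hcard
    refine ⟨f, fun a ha => (Fintype.bijective_iff_card_filter_eq_one _).mpr fun b => ?_, hR⟩
    rw [← card_filter_sub_eq_of_coe_eq_graph hR (a, b)]
    exact hone (a, b) ha
  · rintro ⟨f, hplanar, hR⟩
    refine ⟨card_eq_card_of_coe_eq_graph hR, fun g hg => ?_, fun g hg hne => ?_⟩
    · rw [card_filter_sub_eq_of_coe_eq_graph hR]
      exact (Fintype.bijective_iff_card_filter_eq_one _).mp (hplanar g.1 hg) g.2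
    · have hg2 : g.2 ≠ 0 := fun h => hne (Prod.ext hg h)
      simp [card_filter_sub_eq_of_coe_eq_graph hR, hg, hg2.symm]

open scoped Classical in
/-- Let `H` and `N` be finite (additive) groups of order `n` and `R ⊆ H × N`. Then `R` is an
`(n,n,n,1)` difference set in `H × N` relative to `{0} × N` if and only if there is a planar
function `f : H → N` with `R = {(x, f x) : x ∈ H}`. -/
theorem rds_iff_planar {H N : Type*} [AddCommGroup H] [AddCommGroup N]
    [Fintype H] [Fintype N] (n : ℕ) (hH : Fintype.card H = n) (hN : Fintype.card N = n)
    (R : Finset (H × N)) :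
    (R.card = n ∧
      (∀ g : H × N, g.1 ≠ 0 →
        ((R ×ˢ R).filter (fun p => p.1 - p.2 = g)).card = 1) ∧
      (∀ g : H × N, g.1 = 0 → g ≠ 0 →
        ((R ×ˢ R).filter (fun p => p.1 - p.2 = g)).card = 0)) ↔
    ∃ f : H → N,
      (∀ a : H, a ≠ 0 → Function.Bijective (fun x : H => f (x + a) - f x)) ∧
      (R : Set (H × N)) = {p : H × N | p.2 = f p.1} :=
  rds_iff_planar_general n hH R
end

section
/- Let f : F_{2^m} → F_{2^m}. Define an operation on G = F_{2^m} × F_{2^m} by (x,y) ⋆ (x',y') = (x+x', y+y'+xx'), where xx' is field multiplication. Then the set R = {(x, f(x)) : x ∈ F_{2^m}} is a (2^m, 2^m, 2^m, 1) difference set in (G, ⋆) relative to {0} × F_{2^m} if and only if f is planar in the modified sense, i.e., for every nonzero a ∈ F_{2^m}, the map x ↦ f(x+a) + f(x) + ax is a permutation of F_{2^m}. -/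
/-!
For `r = (x + a, f (x + a))` and `r' = (x, f x)` the quotient `r ⋆ r'⁻¹` is
`(a, f (x + a) - f x - a x)`, so the pairs of `R` with quotient `(a, b)` are in bijection with the
solutions of `f (x + a) - f x - a x = b`. For `a = 0` this equation reads `0 = b`, so the quotients
automatically avoid `{0} × F`; for `a ≠ 0` each `(a, b)` is covered once exactly when the map
is a permutation. Since `|F| = 2^m` forces characteristic two, the signs may be replaced by `+`.
-/

open Finset

section

variable {F : Type*} [CommRing F]

def twistedMul (p q : F × F) : F × F := (p.1 + q.1, p.2 + q.2 + p.1 * q.1)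

def twistedInv (p : F × F) : F × F := (-p.1, -p.2 + p.1 * p.1)

def modifiedDerivative (f : F → F) (a x : F) : F := f (x + a) - f x - a * x

lemma modifiedDerivative_zero (f : F → F) : modifiedDerivative f 0 = 0 := by
  ext x
  simp [modifiedDerivative]

lemma modifiedDerivative_eq_add [CharP F 2] (f : F → F) (a x : F) :
    modifiedDerivative f a x = f (x + a) + f x + a * x := by
  simp only [modifiedDerivative, CharTwo.sub_eq_add]

lemma twistedMul_graph_twistedInv_eq_iff (f : F → F) (x y a b : F) :
    twistedMul (y, f y) (twistedInv (x, f x)) = (a, b) ↔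
      y = x + a ∧ modifiedDerivative f a x = b := by
  simp only [twistedMul, twistedInv, modifiedDerivative, Prod.mk.injEq]
  constructor
  · rintro ⟨rfl, rfl⟩
    constructor <;> ring_nf
  · rintro ⟨rfl, rfl⟩
    constructor <;> ring

variable [Fintype F] [DecidableEq F]

lemma graph_pairs_filter_twistedMul_twistedInv_eq (f : F → F) (a b : F) :
    ({p ∈ (univ.image fun x => (x, f x)) ×ˢ (univ.image fun x => (x, f x)) |
        twistedMul p.1 (twistedInv p.2) = (a, b)} : Finset _) =
      ({x | modifiedDerivative f a x = b} : Finset F).image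
        fun x => ((x + a, f (x + a)), (x, f x)) := by
  ext ⟨r, r'⟩
  simp only [mem_filter, mem_product, mem_image, mem_univ, true_and]
  constructor
  · rintro ⟨⟨⟨y, rfl⟩, ⟨x, rfl⟩⟩, hq⟩
    obtain ⟨rfl, hx⟩ := (twistedMul_graph_twistedInv_eq_iff f x y a b).1 hq
    exact ⟨x, hx, rfl⟩
  · rintro ⟨x, hx, ⟨⟩⟩
    exact ⟨⟨⟨_, rfl⟩, ⟨_, rfl⟩⟩,
      (twistedMul_graph_twistedInv_eq_iff f x _ a b).2 ⟨rfl, hx⟩⟩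

lemma card_graph_pairs_twistedMul_twistedInv_eq (f : F → F) (a b : F) :
    #{p ∈ (univ.image fun x => (x, f x)) ×ˢ (univ.image fun x => (x, f x)) |
        twistedMul p.1 (twistedInv p.2) = (a, b)} = #{x | modifiedDerivative f a x = b} := by
  rw [graph_pairs_filter_twistedMul_twistedInv_eq,
    card_image_of_injective _ fun _ _ h => congrArg (fun p => p.2.1) h]

end

open scoped Classical in
/-- For `q = 2^m` and `G = F_q × F_q` with `(x,y) ⋆ (x',y') = (x+x', y+y'+xx')`, the set
`R = {(x, f x)}` is a `(2^m,2^m,2^m,1)` difference set relative to `{0} × F_q` if and only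
if `f` is planar in the modified sense: `x ↦ f(x+a)+f(x)+ax` is a permutation for all
nonzero `a`. -/
theorem rds_in_Z4_group_iff_modified_planar {F : Type*} [Field F] [Fintype F] (m : ℕ)
    (hF : Fintype.card F = 2 ^ m) (f : F → F) :
    let star : F × F → F × F → F × F :=
      fun p q => (p.1 + q.1, p.2 + q.2 + p.1 * q.1)
    let inv : F × F → F × F := fun p => (-p.1, -p.2 + p.1 * p.1)
    let R : Finset (F × F) := Finset.univ.image (fun x : F => (x, f x))
    (R.card = 2 ^ m ∧
      (∀ g : F × F, g.1 ≠ 0 →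
        ((R ×ˢ R).filter (fun p => star p.1 (inv p.2) = g)).card = 1) ∧
      (∀ g : F × F, g.1 = 0 → g ≠ (0, 0) →
        ((R ×ˢ R).filter (fun p => star p.1 (inv p.2) = g)).card = 0)) ↔
    (∀ a : F, a ≠ 0 →
      Function.Bijective (fun x : F => f (x + a) + f x + a * x)) := by
  intro star inv R
  have : CharP F 2 := charP_of_card_eq_prime_pow hF
  have hR : R.card = 2 ^ m := by
    rw [← hF, ← card_univ]
    exact card_image_of_injective _ fun _ _ h => (Prod.ext_iff.1 h).1
  have hcount (a b : F) : ((R ×ˢ R).filter (fun p => star p.1 (inv p.2) = (a, b))).card =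
      #{x | modifiedDerivative f a x = b} := by
    convert card_graph_pairs_twistedMul_twistedInv_eq f a b using 3
    exact Iff.rfl
  have hplanar (a : F) : Function.Bijective (fun x : F => f (x + a) + f x + a * x) ↔
      ∀ b, #{x | modifiedDerivative f a x = b} = 1 := by
    simp only [← modifiedDerivative_eq_add, Function.bijective_iff_existsUnique,
      Fintype.existsUnique_iff_card_one]
  have hvertical (b : F) (hb : b ≠ 0) : #{x | modifiedDerivative f 0 x = b} = 0 := by
    simp [modifiedDerivative_zero, hb.symm]
  simp only [Prod.forall, hcount, hplanar, hR, true_and]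
  constructor
  · exact fun h a ha b => h.1 a b ha
  · refine fun h => ⟨fun a b ha => h a ha b, ?_⟩
    rintro a b rfl hb
    exact hvertical b (by simpa using hb)
end

section
/- For q = 2^m, the set G = F_q × F_q with operation (x,y) ⋆ (x',y') = (x+x', y+y'+xx') is an abelian group in which every element of G outside the subgroup N = {0} × F_q has order 4, and N is elementary abelian of order 2^m; consequently G is isomorphic to Z_4^m. -/
/-!
In characteristic 2 we have `p ⋆ p = (0, p.1 ^ 2)`, so the group is killed by `4` and is a
`ZMod 4`-module. For an `𝔽₂`-basis `(bᵢ)` of `F` the elements `(bᵢ, 0)` are `ZMod 4`-linearly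
independent: the first coordinate of `∑ cᵢ • (bᵢ, 0)` is `∑ (cᵢ mod 2) • bᵢ`, so a vanishing
combination has `c = d + d`, and then it equals `(0, (∑ (dᵢ mod 2) • bᵢ) ^ 2)`, so `d` is even as
well and `c = 0`. Both sides have `4 ^ m` elements.
-/

lemma zmod4_eq_add_self_of_cast_eq_zero :
    ∀ a : ZMod 4, (a.cast : ZMod 2) = 0 → ∃ b, a = b + b := by
  decide

lemma zmod4_add_self_eq_zero_of_cast_eq_zero :
    ∀ b : ZMod 4, (b.cast : ZMod 2) = 0 → b + b = 0 := by
  decide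

/-- `F × F` with `⋆` written as `+`; a type synonym, so that the componentwise addition of `Prod`
is not in the way. -/
def StarGroup (F : Type*) := F × F

namespace StarGroup

@[ext] lemma ext {F : Type*} {p q : StarGroup F} (h₁ : p.1 = q.1) (h₂ : p.2 = q.2) : p = q :=
  Prod.ext h₁ h₂

variable {F : Type*} [CommRing F]

instance : Add (StarGroup F) := ⟨fun p q => ((p.1 + q.1, p.2 + q.2 + p.1 * q.1) : F × F)⟩
instance : Zero (StarGroup F) := ⟨((0, 0) : F × F)⟩
instance : Neg (StarGroup F) := ⟨fun p => ((-p.1, p.1 ^ 2 - p.2) : F × F)⟩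

@[simp] lemma add_fst (p q : StarGroup F) : (p + q).1 = p.1 + q.1 := rfl
@[simp] lemma add_snd (p q : StarGroup F) : (p + q).2 = p.2 + q.2 + p.1 * q.1 := rfl
@[simp] lemma zero_fst : (0 : StarGroup F).1 = 0 := rfl
@[simp] lemma zero_snd : (0 : StarGroup F).2 = 0 := rfl
@[simp] lemma neg_fst (p : StarGroup F) : (-p).1 = -p.1 := rfl
@[simp] lemma neg_snd (p : StarGroup F) : (-p).2 = p.1 ^ 2 - p.2 := rfl

instance : AddCommGroup (StarGroup F) where
  add_assoc p q r := by ext <;> simp only [add_fst, add_snd] <;> ring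
  zero_add p := by ext <;> simp
  add_zero p := by ext <;> simp
  neg_add_cancel p := by
    ext <;> simp only [add_fst, add_snd, neg_fst, neg_snd, zero_fst, zero_snd] <;> ring
  add_comm p q := by ext <;> simp only [add_fst, add_snd] <;> ring
  nsmul := nsmulRec
  zsmul := zsmulRec

def fst : StarGroup F →+ F where
  toFun p := p.1
  map_zero' := rfl
  map_add' _ _ := rfl

@[simp] lemma fst_apply (p : StarGroup F) : fst p = p.1 := rfl

def ofFst (x : F) : StarGroup F := ((x, 0) : F × F)

@[simp] lemma ofFst_fst (x : F) : (ofFst x).1 = x := rfl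

instance [Finite F] : Finite (StarGroup F) := inferInstanceAs (Finite (F × F))

lemma natCard_eq [Module (ZMod 2) F] [Finite F] {ι : Type*} [Finite ι]
    (b : Module.Basis ι (ZMod 2) F) :
    Nat.card (StarGroup F) = Nat.card (ι → ZMod 4) := by
  change Nat.card (F × F) = _
  rw [Nat.card_prod, Nat.card_congr b.equivFun.toEquiv, Nat.card_fun, Nat.card_fun, Nat.card_zmod,
    Nat.card_zmod, ← mul_pow]
  rfl

section CharTwo

variable [CharP F 2]

@[simp] lemma add_self_fst (p : StarGroup F) : (p + p).1 = 0 := by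
  simp [CharTwo.add_self_eq_zero]

@[simp] lemma add_self_snd (p : StarGroup F) : (p + p).2 = p.1 ^ 2 := by
  simp [CharTwo.add_self_eq_zero, sq]

lemma add_self_eq_zero_iff [IsReduced F] {p : StarGroup F} : p + p = 0 ↔ p.1 = 0 := by
  constructor
  · intro h
    have hsq : p.1 ^ 2 = 0 := by rw [← add_self_snd, h, zero_snd]
    exact IsReduced.eq_zero _ ⟨2, hsq⟩
  · intro h
    ext
    · exact add_self_fst p
    · rw [add_self_snd, h, zero_snd, sq, zero_mul]

lemma four_nsmul (p : StarGroup F) : 4 • p = 0 := by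
  rw [show (4 : ℕ) = 2 + 2 from rfl, add_nsmul, two_nsmul]
  ext <;> simp [CharTwo.add_self_eq_zero]

instance : Module (ZMod 4) (StarGroup F) := AddCommGroup.zmodModule four_nsmul

lemma fst_zmod_smul [Module (ZMod 2) F] (c : ZMod 4) (p : StarGroup F) :
    (c • p).1 = (c.cast : ZMod 2) • p.1 := by
  have hval : c • p = c.val • p := by
    rw [← Nat.cast_smul_eq_nsmul (ZMod 4), ZMod.natCast_zmod_val]
  rw [hval, ← fst_apply, map_nsmul, ← ZMod.natCast_val, Nat.cast_smul_eq_nsmul, fst_apply]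

variable [Module (ZMod 2) F] [IsReduced F]

lemma linearIndependent_ofFst {ι : Type*} [Fintype ι] {b : ι → F}
    (hb : LinearIndependent (ZMod 2) b) : LinearIndependent (ZMod 4) (fun i => ofFst (b i)) := by
  have hmod2 : ∀ c : ι → ZMod 4, (∑ i, c i • ofFst (b i)).1 = 0 →
      ∀ i, ((c i).cast : ZMod 2) = 0 := by
    intro c hc
    refine Fintype.linearIndependent_iff.mp hb _ ?_
    rw [← hc, ← fst_apply, map_sum]
    simp only [fst_apply, fst_zmod_smul, ofFst_fst]
  rw [Fintype.linearIndependent_iff]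
  intro c hc
  choose d hd using fun i =>
    zmod4_eq_add_self_of_cast_eq_zero _ (hmod2 c (by rw [hc, zero_fst]) i)
  have hd0 : (∑ i, d i • ofFst (b i)).1 = 0 := by
    rw [← add_self_eq_zero_iff, ← Finset.sum_add_distrib, ← hc]
    simp only [hd, add_smul]
  intro i
  rw [hd i]
  exact zmod4_add_self_eq_zero_of_cast_eq_zero _ (hmod2 d hd0 i)

noncomputable def linearEquivOfBasis [Finite F] {ι : Type*} [Fintype ι]
    (b : Module.Basis ι (ZMod 2) F) : (ι → ZMod 4) ≃ₗ[ZMod 4] StarGroup F :=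
  LinearEquiv.ofBijective (Fintype.linearCombination (ZMod 4) fun i => ofFst (b i)) <|
    (linearIndependent_ofFst b.linearIndependent).fintypeLinearCombination_injective
      |>.bijective_of_nat_card_le (natCard_eq b).le

end CharTwo
end StarGroup

/-- For `q = 2^m`, the set `G = F_q × F_q` with `(x,y) ⋆ (x',y') = (x+x', y+y'+xx')` is an
abelian group in which every element outside `N = {0} × F_q` has order `4`, every element
of `N` has order at most `2` (so `N` is elementary abelian of order `2^m`), and `G` is
isomorphic to `Z_4^m`. -/
theorem star_group_isomorphic_Z4m {F : Type*} [Field F] [Fintype F] (m : ℕ)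
    (hF : Fintype.card F = 2 ^ m) :
    let star : F × F → F × F → F × F :=
      fun p q => (p.1 + q.1, p.2 + q.2 + p.1 * q.1)
    (∀ p q : F × F, star p q = star q p) ∧
    (∀ p q r : F × F, star (star p q) r = star p (star q r)) ∧
    (∀ p : F × F, star (0, 0) p = p) ∧
    (∀ p : F × F, p.1 ≠ 0 →
      star p p ≠ (0, 0) ∧ star (star p p) (star p p) = (0, 0)) ∧
    (∀ p : F × F, p.1 = 0 → star p p = (0, 0)) ∧
    ∃ e : (F × F) ≃ (Fin m → ZMod 4), ∀ p q : F × F, e (star p q) = e p + e q := by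
  intro star
  have : CharP F 2 := charP_of_card_eq_prime_pow hF
  let := ZMod.algebra F 2
  have hrank : Module.finrank (ZMod 2) F = m := by
    rw [Module.card_eq_pow_finrank (K := ZMod 2), ZMod.card] at hF
    exact Nat.pow_right_injective le_rfl hF
  let e := StarGroup.linearEquivOfBasis (Module.finBasisOfFinrankEq (ZMod 2) F hrank)
  refine ⟨add_comm (G := StarGroup F), add_assoc (G := StarGroup F), zero_add (M := StarGroup F),
    fun p hp => ⟨?_, ?_⟩, fun p => StarGroup.add_self_eq_zero_iff.mpr,
    e.symm.toEquiv, map_add e.symm⟩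
  · exact StarGroup.add_self_eq_zero_iff.not.mpr hp
  · exact StarGroup.add_self_eq_zero_iff.mpr (StarGroup.add_self_fst p)
end

section
/- Let q be an odd prime power and let f : F_q → F_q be given by a Dembowski-Ostrom polynomial, i.e., f(x) = Σ_{0 ≤ i ≤ j < m} a_{ij} x^{p^i + p^j} where q = p^m. Then f is planar (every nonzero difference map x ↦ f(x+a) − f(x) is bijective) if and only if f is 2-to-1, i.e., for every nonzero b ∈ F_q the equation f(x) = b has either 0 or exactly 2 solutions, and f(x) = 0 has only the solution x = 0. -/
/-!
A Dembowski-Ostrom polynomial `f` is even, and its polar `f (x + y) - f x - f y` is biadditive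
because Frobenius is additive. For such `f` the difference map in direction `t` is
`x ↦ f t + polar f x t`, so it fails to be injective exactly when `polar f z t = 0` for some
`z ≠ 0`, i.e. when `f (z + t) = f (z - t)` with `z + t ≠ ±(z - t)` (no 2-torsion). Hence `f` is
planar iff `f u = f v` forces `u = ±v`, i.e. iff every nonzero fibre is empty or a pair `{u, -u}`.
-/

open Finset QuadraticMap

/-- Over `ℤ` these are exactly the quadratic maps. -/
def evenPolarAdditive (V N : Type*) [AddCommGroup V] [AddCommGroup N] :
    AddSubmonoid (V → N) where
  carrier := {f | f.Even ∧ ∀ x x' y, polar f (x + x') y = polar f x y + polar f x' y}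
  zero_mem' := ⟨Function.Even.zero, fun _ _ _ => by simp [polar]⟩
  add_mem' := fun {f g} hf hg => ⟨hf.1.add hg.1, fun x x' y => by
    simp only [polar_add, hf.2, hg.2]
    abel⟩

def IsPlanar {V N : Type*} [AddGroup V] [Sub N] (f : V → N) : Prop :=
  ∀ t : V, t ≠ 0 → Function.Bijective fun x => f (x + t) - f x

namespace evenPolarAdditive

variable {V N : Type*} [AddCommGroup V] [AddCommGroup N] {f : V → N}

def polarLeft (hf : f ∈ evenPolarAdditive V N) (y : V) : V →+ N :=
  AddMonoidHom.mk' (polar f · y) (hf.2 · · y)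

theorem map_zero (hf : f ∈ evenPolarAdditive V N) : f 0 = 0 := by
  have h := (polarLeft hf 0).map_zero
  simp only [polarLeft, AddMonoidHom.mk'_apply, polar, add_zero, sub_self, zero_sub,
    neg_eq_zero] at h
  exact h

theorem polar_sub_left (hf : f ∈ evenPolarAdditive V N) (x x' y : V) :
    polar f (x - x') y = polar f x y - polar f x' y :=
  (polarLeft hf y).map_sub x x'

theorem polar_neg_right (hf : f ∈ evenPolarAdditive V N) (x y : V) :
    polar f x (-y) = -polar f x y := by
  rw [polar_comm, polar_comm f x]
  exact (polarLeft hf x).map_neg y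

theorem map_add_eq_map_sub (hf : f ∈ evenPolarAdditive V N) {x y : V}
    (hxy : polar f x y = 0) : f (x + y) = f (x - y) := by
  have hsub := polar_neg_right hf x y
  rw [hxy, neg_zero] at hsub
  simp only [polar, sub_eq_iff_eq_add] at hxy hsub
  rw [hxy, sub_eq_add_neg, hsub, hf.1]

end evenPolarAdditive

section Planar

variable {V : Type*} [AddCommGroup V]

/-- The difference map in direction `u - v` vanishes at `v` and at `-u`. -/
theorem IsPlanar.eq_or_eq_neg_of_map_eq {N : Type*} [AddGroup N] {f : V → N} (heven : f.Even)
    (hf : IsPlanar f) {u v : V} (huv : f u = f v) : u = v ∨ u = -v := by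
  by_cases h : u = v
  · exact Or.inl h
  · refine Or.inr ?_
    have hvu : v = -u := (hf (u - v) (sub_ne_zero.mpr h)).injective <| by
      rw [add_sub_cancel, show -u + (u - v) = -v by abel, heven.eq, heven.eq, huv]
    rw [hvu, neg_neg]

theorem isPlanar_of_eq_or_eq_neg [Finite V] {f : V → V} (hf : f ∈ evenPolarAdditive V V)
    (hV : ∀ x : V, x + x = 0 → x = 0) (hfib : ∀ u v, f u = f v → u = v ∨ u = -v) :
    IsPlanar f := by
  intro t ht
  refine (Finite.injective_iff_bijective (α := V)).mp fun x y hxy => ?_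
  have hpolar : polar f (x - y) t = 0 := by
    rw [evenPolarAdditive.polar_sub_left hf, sub_eq_zero]
    unfold polar
    rw [hxy]
  rcases hfib _ _ (evenPolarAdditive.map_add_eq_map_sub hf hpolar) with h | h
  · refine absurd (hV t ?_) ht
    rw [← sub_eq_zero.mpr h]
    abel
  · refine sub_eq_zero.mp (hV _ ?_)
    rw [← eq_neg_iff_add_eq_zero.mp h]
    abel

theorem isPlanar_iff_eq_or_eq_neg [Finite V] {f : V → V} (hf : f ∈ evenPolarAdditive V V)
    (hV : ∀ x : V, x + x = 0 → x = 0) :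
    IsPlanar f ↔ ∀ u v, f u = f v → u = v ∨ u = -v :=
  ⟨fun hplanar _ _ => hplanar.eq_or_eq_neg_of_map_eq hf.1, isPlanar_of_eq_or_eq_neg hf hV⟩

end Planar

section TwoToOne

variable {V N : Type*} [AddCommGroup V] [Fintype V] [DecidableEq V] [DecidableEq N] {f : V → N}

theorem filter_map_eq_eq_pair (heven : f.Even) (hfib : ∀ u v, f u = f v → u = v ∨ u = -v)
    (u : V) : univ.filter (f · = f u) = {u, -u} := by
  ext x
  simp only [mem_filter, mem_univ, true_and, mem_insert, mem_singleton]
  refine ⟨fun hx => hfib x u hx, ?_⟩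
  rintro (rfl | rfl)
  exacts [rfl, heven u]

theorem eq_or_eq_neg_iff_two_to_one [Zero N] (heven : f.Even) (hf0 : f 0 = 0)
    (hV : ∀ x : V, x + x = 0 → x = 0) :
    (∀ u v, f u = f v → u = v ∨ u = -v) ↔
      (∀ b, b ≠ 0 → #(univ.filter (f · = b)) = 0 ∨ #(univ.filter (f · = b)) = 2) ∧
        ∀ x, f x = 0 → x = 0 := by
  have hpair {u : V} (hu : f u ≠ 0) : #({u, -u} : Finset V) = 2 := by
    refine card_pair fun h => hu ?_
    rw [hV u (by nth_rw 2 [h]; exact add_neg_cancel u), hf0]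
  constructor
  · intro hfib
    refine ⟨fun b hb => ?_, fun x hx => by simpa using hfib x 0 (hx.trans hf0.symm)⟩
    by_cases hex : ∃ u, f u = b
    · obtain ⟨u, rfl⟩ := hex
      exact Or.inr (by rw [filter_map_eq_eq_pair heven hfib, hpair hb])
    · exact Or.inl (card_eq_zero.mpr (filter_eq_empty_iff.mpr fun x _ hx => hex ⟨x, hx⟩))
  · rintro ⟨hcard, hzero⟩ u v huv
    by_cases hu : f u = 0
    · exact Or.inl ((hzero u hu).trans (hzero v (huv ▸ hu)).symm)
    have hsub : ({u, -u} : Finset V) ⊆ univ.filter (f · = f u) := by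
      intro x hx
      rcases mem_insert.mp hx with rfl | hx
      · simp
      · simp [mem_singleton.mp hx, heven u]
    have hfiber : ({u, -u} : Finset V) = univ.filter (f · = f u) := by
      refine eq_of_subset_of_card_le hsub ?_
      rcases hcard (f u) hu with h | h
      · exact absurd (card_eq_zero.mp h ▸ hsub (mem_insert_self u _)) (notMem_empty u)
      · rw [h, hpair hu]
    have hv : v ∈ ({u, -u} : Finset V) := hfiber ▸ by simp [huv]
    rcases mem_insert.mp hv with rfl | hv
    · exact Or.inl rfl
    · exact Or.inr (by rw [mem_singleton.mp hv, neg_neg])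

end TwoToOne

section DembowskiOstrom

variable {R : Type*} [CommRing R] {p : ℕ} [ExpChar R p]

theorem polar_mul_pow_expChar_pow_add (c : R) (i j : ℕ) (x y : R) :
    polar (fun x : R => c * x ^ (p ^ i + p ^ j)) x y =
      c * (x ^ p ^ i * y ^ p ^ j + y ^ p ^ i * x ^ p ^ j) := by
  simp only [polar, pow_add, add_pow_expChar_pow]
  ring

theorem mul_pow_expChar_pow_add_mem_evenPolarAdditive (hp : Odd p) (c : R) (i j : ℕ) :
    (fun x : R => c * x ^ (p ^ i + p ^ j)) ∈ evenPolarAdditive R R := by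
  refine ⟨fun x => by simp only [(hp.pow.add_odd hp.pow).neg_pow], fun x x' y => ?_⟩
  simp only [polar_mul_pow_expChar_pow_add, add_pow_expChar_pow]
  ring

theorem dembowskiOstrom_mem_evenPolarAdditive (hp : Odd p) (m : ℕ) (a : ℕ → ℕ → R) :
    (fun x : R => ∑ i ∈ range m, ∑ j ∈ range m,
      if i ≤ j then a i j * x ^ (p ^ i + p ^ j) else 0) ∈ evenPolarAdditive R R := by
  have hsum : (fun x : R => ∑ i ∈ range m, ∑ j ∈ range m,
      if i ≤ j then a i j * x ^ (p ^ i + p ^ j) else 0) =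
      ∑ i ∈ range m, ∑ j ∈ range m,
        fun x : R => (if i ≤ j then a i j else 0) * x ^ (p ^ i + p ^ j) := by
    ext x
    simp only [Finset.sum_apply, ite_zero_mul]
  rw [hsum]
  exact sum_mem fun i _ => sum_mem fun j _ =>
    mul_pow_expChar_pow_add_mem_evenPolarAdditive hp _ i j

end DembowskiOstrom

open scoped Classical in
theorem DO_planar_iff_two_to_one_general {F : Type*} [Field F] [Fintype F] (p m : ℕ)
    (hp : p.Prime) (hodd : Odd p) [CharP F p]
    (a : ℕ → ℕ → F) (f : F → F)
    (hf : ∀ x : F, f x = ∑ i ∈ Finset.range m, ∑ j ∈ Finset.range m,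
      if i ≤ j then a i j * x ^ (p ^ i + p ^ j) else 0) :
    (∀ t : F, t ≠ 0 → Function.Bijective (fun x : F => f (x + t) - f x)) ↔
      ((∀ b : F, b ≠ 0 →
          (Finset.univ.filter (fun x : F => f x = b)).card = 0 ∨
          (Finset.univ.filter (fun x : F => f x = b)).card = 2) ∧
        (∀ x : F, f x = 0 → x = 0)) := by
  have := Fact.mk hp
  have hDO : f ∈ evenPolarAdditive F F :=
    funext hf ▸ dembowskiOstrom_mem_evenPolarAdditive hodd m a
  have htwo : (2 : F) ≠ 0 := Ring.two_ne_zero <| by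
    rw [ringChar.eq F p]
    rintro rfl
    exact Nat.not_odd_iff_even.mpr even_two hodd
  have hF2 (x : F) (hx : x + x = 0) : x = 0 := by
    rw [← two_mul] at hx
    exact (mul_eq_zero.mp hx).resolve_left htwo
  exact (isPlanar_iff_eq_or_eq_neg hDO hF2).trans
    (eq_or_eq_neg_iff_two_to_one hDO.1 (evenPolarAdditive.map_zero hDO) hF2)

open scoped Classical in
/-- A Dembowski-Ostrom polynomial `f(x) = Σ_{0 ≤ i ≤ j < m} a_{ij} x^{p^i+p^j}` over `F_q`,
`q = p^m` odd, is planar if and only if `f` is `2`-to-`1`: `f(x) = b` has `0` or `2`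
solutions for every nonzero `b`, and `f(x) = 0` only for `x = 0`. -/
theorem DO_planar_iff_two_to_one {F : Type*} [Field F] [Fintype F] (p m : ℕ)
    (hp : p.Prime) (hodd : Odd p) [CharP F p] (hF : Fintype.card F = p ^ m)
    (a : ℕ → ℕ → F) (f : F → F)
    (hf : ∀ x : F, f x = ∑ i ∈ Finset.range m, ∑ j ∈ Finset.range m,
      if i ≤ j then a i j * x ^ (p ^ i + p ^ j) else 0) :
    (∀ t : F, t ≠ 0 → Function.Bijective (fun x : F => f (x + t) - f x)) ↔
      ((∀ b : F, b ≠ 0 →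
          (Finset.univ.filter (fun x : F => f x = b)).card = 0 ∨
          (Finset.univ.filter (fun x : F => f x = b)).card = 2) ∧
        (∀ x : F, f x = 0 → x = 0)) :=
  DO_planar_iff_two_to_one_general p m hp hodd a f hf
end

section
/- Let p be an odd prime and k, m positive integers. The monomial function f(x) = x^{p^k + 1} on F_{p^m} is planar if and only if m / gcd(k, m) is odd. -/
/-!
Write `q = p ^ k`. In characteristic `p` the difference map
`D_a x = (x + a) ^ (q + 1) - x ^ (q + 1)` is affine,
`D_a (x + a * w) - D_a x = a ^ (q + 1) * (w ^ q + w)`, so `D_a` is a bijection iff `w ^ q + w` has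
no nonzero root, i.e. iff `-1` is not a `(q - 1)`-th power in `Fˣ`. In the cyclic group `Fˣ` of
order `p ^ m - 1` this happens iff `(p ^ m - 1) / (p ^ d - 1)` is odd, where `d = gcd k m` and
`p ^ d - 1 = gcd (p ^ k - 1) (p ^ m - 1)`; that quotient is a sum of `m / d` odd powers of `p ^ d`,
so it has the parity of `m / d`.
-/

open Function

section Frobenius

variable {R : Type*} [CommRing R] (p : ℕ) [ExpChar R p] (k : ℕ)

theorem add_pow_expChar_pow_add_one_sub (x a : R) :
    (x + a) ^ (p ^ k + 1) - x ^ (p ^ k + 1) = a * x ^ p ^ k + a ^ p ^ k * x + a ^ (p ^ k + 1) := by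
  rw [pow_succ, add_pow_expChar_pow, pow_succ]
  ring

theorem add_pow_expChar_pow_add_one_sub_add_mul (x a w : R) :
    ((x + a * w + a) ^ (p ^ k + 1) - (x + a * w) ^ (p ^ k + 1)) -
        ((x + a) ^ (p ^ k + 1) - x ^ (p ^ k + 1)) = a ^ (p ^ k + 1) * (w ^ p ^ k + w) := by
  simp only [add_pow_expChar_pow_add_one_sub, add_pow_expChar_pow, mul_pow]
  ring

end Frobenius

theorem injective_add_pow_expChar_pow_add_one_sub_iff {F : Type*} [Field F] (p : ℕ) [ExpChar F p]
    (k : ℕ) {a : F} (ha : a ≠ 0) :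
    Injective (fun x : F => (x + a) ^ (p ^ k + 1) - x ^ (p ^ k + 1)) ↔
      ∀ w : F, w ^ p ^ k = -w → w = 0 := by
  have hdiff := add_pow_expChar_pow_add_one_sub_add_mul (R := F) p k
  constructor
  · intro hinj w hw
    have hsame : (0 + a * w + a) ^ (p ^ k + 1) - (0 + a * w) ^ (p ^ k + 1) =
        (0 + a) ^ (p ^ k + 1) - 0 ^ (p ^ k + 1) := by
      rw [← sub_eq_zero, hdiff, hw, neg_add_cancel, mul_zero]
    simpa [ha] using hinj hsame
  · intro h x y hxy
    obtain ⟨w, rfl⟩ : ∃ w, x = y + a * w := ⟨(x - y) / a, by field_simp; ring⟩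
    have hw : a ^ (p ^ k + 1) * (w ^ p ^ k + w) = 0 := by rw [← hdiff, sub_eq_zero.mpr hxy]
    have hroot : w ^ p ^ k + w = 0 := (mul_eq_zero.mp hw).resolve_left (pow_ne_zero _ ha)
    rw [h w (eq_neg_of_add_eq_zero_left hroot), mul_zero, add_zero]

theorem exists_ne_zero_pow_succ_eq_neg_iff {F : Type*} [Field F] (n : ℕ) :
    (∃ w : F, w ≠ 0 ∧ w ^ (n + 1) = -w) ↔ ∃ u : Fˣ, u ^ n = -1 := by
  constructor
  · rintro ⟨w, hw, hwn⟩
    refine ⟨Units.mk0 w hw, Units.ext <| mul_right_cancel₀ hw ?_⟩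
    simp only [Units.val_pow_eq_pow_val, Units.val_mk0, Units.val_neg, Units.val_one]
    rw [← pow_succ, hwn, neg_one_mul]
  · rintro ⟨u, hu⟩
    refine ⟨u, u.ne_zero, ?_⟩
    rw [pow_succ, ← Units.val_pow_eq_pow_val, hu]
    simp

theorem IsCyclic.exists_pow_eq_iff {G : Type*} [CommGroup G] [Finite G] [IsCyclic G] (e : ℕ)
    (x : G) : (∃ y : G, y ^ e = x) ↔ x ^ (Nat.card G / (Nat.card G).gcd e) = 1 := by
  set c := Nat.card G / (Nat.card G).gcd e
  have hcd : c ∣ Nat.card G := Nat.div_dvd_of_dvd (Nat.gcd_dvd_left _ _)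
  have hle : (powMonoidHom e : G →* G).range ≤ (powMonoidHom c).ker := by
    rintro _ ⟨y, rfl⟩
    have hdvd : Nat.card G ∣ e * c := Dvd.intro_left (e / (Nat.card G).gcd e) <| by
      rw [← Nat.mul_div_assoc e (Nat.gcd_dvd_left _ e),
        Nat.div_mul_right_comm (Nat.gcd_dvd_right _ e)]
    simp only [MonoidHom.mem_ker, powMonoidHom_apply, ← pow_mul]
    exact orderOf_dvd_iff_pow_eq_one.mp ((orderOf_dvd_natCard y).trans hdvd)
  have heq := Subgroup.eq_of_le_of_card_ge hle (by
    rw [IsCyclic.card_powMonoidHom_range, IsCyclic.card_powMonoidHom_ker, Nat.gcd_eq_right hcd])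
  exact SetLike.ext_iff.mp heq x

theorem Nat.even_pow_sub_one_div_pow_sub_one_iff {b g m : ℕ} (hb : Odd b) (hb1 : 1 < b)
    (hgm : g ∣ m) : Even ((b ^ m - 1) / (b ^ g - 1)) ↔ Even (m / g) := by
  obtain rfl | hg := g.eq_zero_or_pos
  · simp [Nat.eq_zero_of_zero_dvd hgm]
  obtain ⟨t, rfl⟩ := hgm
  rw [pow_mul, ← Nat.geomSum_eq (Nat.one_lt_pow hg.ne' hb1), Nat.mul_div_cancel_left t hg,
    Finset.even_sum_iff_even_card_odd, Finset.filter_true_of_mem fun i _ => hb.pow.pow,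
    Finset.card_range]

theorem FiniteField.exists_pow_pow_sub_one_eq_neg_one_iff {F : Type*} [Field F] [Fintype F]
    {p m : ℕ} [CharP F p] (hodd : Odd p) (hF : Fintype.card F = p ^ m) (k : ℕ) :
    (∃ u : Fˣ, u ^ (p ^ k - 1) = -1) ↔ Even (m / k.gcd m) := by
  have hp : p.Prime := CharP.char_is_prime F p
  have hchar : ringChar F ≠ 2 := by
    rw [ringChar.eq F p]
    rintro rfl
    exact absurd hodd (by decide)
  have hne : (-1 : Fˣ) ≠ 1 := fun h =>
    Ring.neg_one_ne_one_of_char_ne_two hchar (congrArg Units.val h)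
  rw [IsCyclic.exists_pow_eq_iff, neg_one_pow_eq_one_iff_even hne, Nat.card_units,
    Nat.card_eq_fintype_card, hF, Nat.pow_sub_one_gcd_pow_sub_one, Nat.gcd_comm,
    Nat.even_pow_sub_one_div_pow_sub_one_iff hodd hp.one_lt (Nat.gcd_dvd_right k m)]

theorem monomial_planar_iff_odd_quotient_general {F : Type*} [Field F] [Fintype F] (p k m : ℕ)
    (hodd : Odd p) [CharP F p]
    (hF : Fintype.card F = p ^ m) :
    (∀ a : F, a ≠ 0 →
        Function.Bijective (fun x : F => (x + a) ^ (p ^ k + 1) - x ^ (p ^ k + 1))) ↔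
      Odd (m / Nat.gcd k m) := by
  have : Fact p.Prime := ⟨CharP.char_is_prime F p⟩
  have hq : p ^ k = p ^ k - 1 + 1 := (Nat.sub_add_cancel (Nat.one_le_pow _ _ hodd.pos)).symm
  calc (∀ a : F, a ≠ 0 → Bijective fun x : F => (x + a) ^ (p ^ k + 1) - x ^ (p ^ k + 1))
      ↔ ∀ w : F, w ^ p ^ k = -w → w = 0 := by
        have hinj {a : F} (ha : a ≠ 0) := injective_add_pow_expChar_pow_add_one_sub_iff p k ha
        simp only [← Finite.injective_iff_bijective]
        exact ⟨fun h => (hinj one_ne_zero).mp (h 1 one_ne_zero), fun h _ ha => (hinj ha).mpr h⟩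
    _ ↔ ¬∃ u : Fˣ, u ^ (p ^ k - 1) = -1 := by
        rw [← exists_ne_zero_pow_succ_eq_neg_iff, ← hq]
        simp only [not_exists, not_and, ne_eq, not_imp_not]
    _ ↔ Odd (m / k.gcd m) := by
        rw [FiniteField.exists_pow_pow_sub_one_eq_neg_one_iff hodd hF, Nat.not_even_iff_odd]

/-- For `p` an odd prime and `k, m ≥ 1`, the monomial `x ↦ x^{p^k+1}` is planar on
`F_{p^m}` if and only if `m / gcd(k,m)` is odd. -/
theorem monomial_planar_iff_odd_quotient {F : Type*} [Field F] [Fintype F] (p k m : ℕ)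
    (hp : p.Prime) (hodd : Odd p) [CharP F p] (hk : 0 < k) (hm : 0 < m)
    (hF : Fintype.card F = p ^ m) :
    (∀ a : F, a ≠ 0 →
        Function.Bijective (fun x : F => (x + a) ^ (p ^ k + 1) - x ^ (p ^ k + 1))) ↔
      Odd (m / Nat.gcd k m) :=
  monomial_planar_iff_odd_quotient_general p k m hodd hF
end

section
/- Let B be a symmetric bilinear form on F_2^m, and define on G = F_2^m × F_2 the operation (x,y) ∗ (x',y') = (x+x', y+y'+B(x,x')). Then (G, ∗) is an abelian group. It is isomorphic to Z_2^{m+1} if B is alternating (B(x,x) = 0 for all x), and isomorphic to Z_4 × Z_2^{m-1} if B is nonalternating. -/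
/-!
Replacing the section `x ↦ (x, 0)` by `x ↦ (x, Q x)` turns the cocycle `B` into `B - polar Q`.
An alternating form is the polar of `x ↦ B' x x`, where `B'` is its strictly upper triangular
part in a basis, so in the alternating case the extension splits. Otherwise `φ x = B x x` is a
nonzero linear form and `B - φ ⊗ φ` is alternating, which reduces the cocycle to `φ ⊗ φ`. That
extension is `ZMod 4 × ker φ`: for `φ a = 1` the element `(a, 0)` has order four, and the binary
digits of `k : ZMod 4` carry exactly the cocycle `s t` on `ZMod 2`.
-/

open LinearMap (BilinForm)
open Module

variable {V : Type*} [AddCommGroup V]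

section TwistedAdd

variable {R : Type*} [CommRing R] [Module R V]

def twistedAdd (B : BilinForm R V) (p q : V × R) : V × R :=
  (p.1 + q.1, p.2 + q.2 + B p.1 q.1)

variable (B : BilinForm R V)

theorem twistedAdd_comm {B : BilinForm R V} (hB : B.IsSymm) (p q : V × R) :
    twistedAdd B p q = twistedAdd B q p := by
  simp only [twistedAdd, add_comm p.1, add_comm p.2, hB.eq p.1]

theorem twistedAdd_assoc (p q r : V × R) :
    twistedAdd B (twistedAdd B p q) r = twistedAdd B p (twistedAdd B q r) := by
  simp only [twistedAdd, map_add, LinearMap.add_apply, Prod.mk.injEq]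
  exact ⟨add_assoc .., by ring⟩

theorem zero_twistedAdd (p : V × R) : twistedAdd B (0, 0) p = p := by
  simp [twistedAdd]

theorem twistedAdd_neg (p : V × R) : twistedAdd B p (-p.1, -p.2 + B p.1 p.1) = (0, 0) := by
  simp [twistedAdd]

theorem twistedAdd_zero_eq_add (p q : V × R) : twistedAdd 0 p q = p + q :=
  Prod.ext rfl (add_zero _)

def shear (Q : V → R) : V × R ≃ V × R :=
  Equiv.prodShear (Equiv.refl V) fun x => Equiv.addRight (Q x)

theorem shear_twistedAdd {C : BilinForm R V} {Q : QuadraticForm R V} (hQ : Q.polarBilin = B - C)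
    (p q : V × R) : shear Q (twistedAdd C p q) = twistedAdd B (shear Q p) (shear Q q) := by
  have h := LinearMap.congr_fun₂ hQ p.1 q.1
  simp only [QuadraticMap.polarBilin_apply_apply, QuadraticMap.polar, LinearMap.sub_apply] at h
  ext
  · simp [shear, twistedAdd]
  · simp only [shear, twistedAdd, Equiv.prodShear_apply, Equiv.coe_refl, id_eq, Equiv.coe_addRight]
    linear_combination h

end TwistedAdd

theorem Equiv.exists_map_op_eq_add {X A A' : Type*} [Add A] [Add A'] (op : X → X → X)
    (f : A ≃ X) (hf : ∀ a b, f (a + b) = op (f a) (f b)) (g : A ≃+ A') :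
    ∃ e : X ≃ A', ∀ p q, e (op p q) = e p + e q := by
  refine ⟨f.symm.trans g.toEquiv, fun p q => ?_⟩
  obtain ⟨a, rfl⟩ := f.surjective p
  obtain ⟨b, rfl⟩ := f.surjective q
  simp [← hf]

namespace LinearMap.BilinForm

theorem IsAlt.exists_eq_sub_flip {R : Type*} [CommRing R] [Module R V] [Free R V]
    {B : BilinForm R V} (hB : B.IsAlt) : ∃ B' : BilinForm R V, B = B' - B'.flip := by
  obtain ⟨ι, b⟩ := Free.exists_basis (R := R) (M := V)
  let : LinearOrder ι := IsWellOrder.linearOrder WellOrderingRel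
  refine ⟨b.constr R fun i => b.constr R fun j => if i < j then B (b i) (b j) else 0,
    b.ext fun i => b.ext fun j => ?_⟩
  obtain h | rfl | h := lt_trichotomy i j
  · simp [h, h.not_gt]
  · simp only [sub_apply, flip_apply, sub_self, Basis.constr_basis]
    exact hB.self_eq_zero _
  · simp only [sub_apply, flip_apply, Basis.constr_basis, h, h.not_gt, if_true, if_false,
      zero_sub]
    exact (hB.neg_eq _ _).symm

theorem IsAlt.exists_polarBilin_eq {R : Type*} [CommRing R] [CharP R 2] [Module R V]
    [Free R V] {B : BilinForm R V} (hB : B.IsAlt) :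
    ∃ Q : QuadraticForm R V, Q.polarBilin = B := by
  obtain ⟨B', rfl⟩ := hB.exists_eq_sub_flip
  refine ⟨B'.toQuadraticMap, ?_⟩
  rw [LinearMap.BilinMap.polarBilin_toQuadraticMap]
  ext x y
  simp [CharTwo.sub_eq_add]

def ofBiadditive {n : ℕ} [Module (ZMod n) V] (B : V → V → ZMod n)
    (h₁ : ∀ x y z, B (x + y) z = B x z + B y z) (h₂ : ∀ x y z, B x (y + z) = B x y + B x z) :
    BilinForm (ZMod n) V :=
  LinearMap.mk₂ (ZMod n) B
    h₁ (fun c x y => ZMod.map_smul (AddMonoidHom.mk' (B · y) (h₁ · · y)) c x)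
    h₂ (fun c x y => ZMod.map_smul (AddMonoidHom.mk' (B x) (h₂ x)) c y)

variable [Module (ZMod 2) V]

def IsSymm.diagLinearForm {B : BilinForm (ZMod 2) V} (hB : B.IsSymm) :
    V →ₗ[ZMod 2] ZMod 2 :=
  AddMonoidHom.toZModLinearMap 2 <| AddMonoidHom.mk' (fun x => B x x) fun x y => by
    simp only [map_add, LinearMap.add_apply, hB.eq y x]
    linear_combination (CharTwo.two_eq_zero : (2 : ZMod 2) = 0) * B x y

theorem IsSymm.isAlt_sub_linMulLin {B : BilinForm (ZMod 2) V} (hB : B.IsSymm) :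
    (B - linMulLin hB.diagLinearForm hB.diagLinearForm).IsAlt := fun x => by
  change B x x - B x x * B x x = 0
  rw [← sq, ZMod.pow_card, sub_self]

theorem IsSymm.exists_diagLinearForm_eq_one {B : BilinForm (ZMod 2) V} (hB : B.IsSymm)
    (hB' : ¬ B.IsAlt) : ∃ a, hB.diagLinearForm a = 1 := by
  obtain ⟨a, ha⟩ := not_forall.1 hB'
  exact ⟨a, Fin.eq_one_of_ne_zero _ ha⟩

end LinearMap.BilinForm

def ZMod.fourEquivDigits : ZMod 4 ≃ ZMod 2 × ZMod 2 where
  toFun k := (k.val, (k.val / 2 : ℕ))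
  invFun d := d.1.val + 2 * d.2.val
  left_inv := by decide
  right_inv := by decide

theorem ZMod.fourEquivDigits_add (k l : ZMod 4) :
    fourEquivDigits (k + l) =
      twistedAdd (LinearMap.mul (ZMod 2) (ZMod 2)) (fourEquivDigits k) (fourEquivDigits l) := by
  simp only [twistedAdd, LinearMap.mul_apply']
  revert k l
  decide

section ZModTwo

variable [Module (ZMod 2) V]

def kerSplitEquiv (φ : V →ₗ[ZMod 2] ZMod 2) {a : V} (ha : φ a = 1) :
    ZMod 4 × LinearMap.ker φ ≃ V × ZMod 2 where
  toFun u := ((ZMod.fourEquivDigits u.1).1 • a + u.2, (ZMod.fourEquivDigits u.1).2)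
  invFun p := (ZMod.fourEquivDigits.symm (φ p.1, p.2), ⟨p.1 - φ p.1 • a, by simp [ha]⟩)
  left_inv u := by
    have hu : φ u.2 = 0 := u.2.2
    ext <;> simp [ha, hu]
  right_inv p := by simp

theorem kerSplitEquiv_add (φ : V →ₗ[ZMod 2] ZMod 2) {a : V} (ha : φ a = 1)
    (u v : ZMod 4 × LinearMap.ker φ) :
    kerSplitEquiv φ ha (u + v) =
      twistedAdd (BilinForm.linMulLin φ φ) (kerSplitEquiv φ ha u) (kerSplitEquiv φ ha v) := by
  have hu : φ u.2 = 0 := u.2.2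
  have hv : φ v.2 = 0 := v.2.2
  obtain ⟨h₁, h₂⟩ := Prod.ext_iff.1 (ZMod.fourEquivDigits_add u.1 v.1)
  ext
  · simp only [kerSplitEquiv, twistedAdd, Equiv.coe_fn_mk, Prod.fst_add, Prod.snd_add,
      Submodule.coe_add, h₁, add_smul]
    abel
  · simp [kerSplitEquiv, twistedAdd, h₂, ha, hu, hv]

variable [Module.Finite (ZMod 2) V]

theorem exists_twistedAdd_equiv_of_isAlt {n : ℕ} (hV : finrank (ZMod 2) V = n)
    {B : BilinForm (ZMod 2) V} (hB : B.IsAlt) :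
    ∃ e : V × ZMod 2 ≃ (Fin (n + 1) → ZMod 2), ∀ p q, e (twistedAdd B p q) = e p + e q := by
  obtain ⟨Q, hQ⟩ := hB.exists_polarBilin_eq
  have hG := LinearEquiv.ofFinrankEq (R := ZMod 2) (V × ZMod 2) (Fin (n + 1) → ZMod 2)
    (by simp [hV])
  refine Equiv.exists_map_op_eq_add _ (shear Q) (fun p q => ?_) hG.toAddEquiv
  rw [← twistedAdd_zero_eq_add, shear_twistedAdd B (by rw [hQ]; abel)]

theorem exists_twistedAdd_equiv_of_not_isAlt {n : ℕ} (hV : finrank (ZMod 2) V = n)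
    {B : BilinForm (ZMod 2) V} (hB : B.IsSymm) (hB' : ¬ B.IsAlt) :
    ∃ e : V × ZMod 2 ≃ ZMod 4 × (Fin (n - 1) → ZMod 2),
      ∀ p q, e (twistedAdd B p q) = e p + e q := by
  obtain ⟨a, ha⟩ := hB.exists_diagLinearForm_eq_one hB'
  set φ := hB.diagLinearForm
  have hker : finrank (ZMod 2) (LinearMap.ker φ) = n - 1 := by
    have := Dual.finrank_ker_add_one_of_ne_zero (f := φ) fun h => by simp [h] at ha
    omega
  obtain ⟨Q, hQ⟩ := hB.isAlt_sub_linMulLin.exists_polarBilin_eq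
  have hK := LinearEquiv.ofFinrankEq (R := ZMod 2) (LinearMap.ker φ) (Fin (n - 1) → ZMod 2)
    (by simp [hker])
  refine Equiv.exists_map_op_eq_add _ ((kerSplitEquiv φ ha).trans (shear Q)) (fun u v => ?_)
    ((AddEquiv.refl _).prodCongr hK.toAddEquiv)
  rw [Equiv.trans_apply, kerSplitEquiv_add, shear_twistedAdd B hQ]
  rfl

end ZModTwo

/-- Let `B` be a symmetric bilinear form on `F_2^m` and define on `G = F_2^m × F_2` the
operation `(x,y) ∗ (x',y') = (x+x', y+y'+B(x,x'))`. Then `(G, ∗)` is an abelian group,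
isomorphic to `Z_2^{m+1}` if `B` is alternating and to `Z_4 × Z_2^{m-1}` otherwise. -/
theorem bilinear_extension_group_structure (m : ℕ)
    (B : (Fin m → ZMod 2) → (Fin m → ZMod 2) → ZMod 2)
    (hsym : ∀ x y, B x y = B y x)
    (hadd₁ : ∀ x y z, B (x + y) z = B x z + B y z)
    (hadd₂ : ∀ x y z, B x (y + z) = B x y + B x z) :
    let star : (Fin m → ZMod 2) × ZMod 2 → (Fin m → ZMod 2) × ZMod 2 →
        (Fin m → ZMod 2) × ZMod 2 :=
      fun p q => (p.1 + q.1, p.2 + q.2 + B p.1 q.1)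
    (∀ p q, star p q = star q p) ∧
    (∀ p q r, star (star p q) r = star p (star q r)) ∧
    (∀ p, star (0, 0) p = p) ∧
    (∀ p, star p (-p.1, -p.2 + B p.1 p.1) = (0, 0)) ∧
    ((∀ x, B x x = 0) →
      ∃ e : ((Fin m → ZMod 2) × ZMod 2) ≃ (Fin (m + 1) → ZMod 2),
        ∀ p q, e (star p q) = e p + e q) ∧
    (¬ (∀ x, B x x = 0) →
      ∃ e : ((Fin m → ZMod 2) × ZMod 2) ≃ (ZMod 4 × (Fin (m - 1) → ZMod 2)),
        ∀ p q, e (star p q) = e p + e q) := by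
  intro star
  let β := LinearMap.BilinForm.ofBiadditive B hadd₁ hadd₂
  have hβ : β.IsSymm := ⟨hsym⟩
  exact ⟨twistedAdd_comm hβ, twistedAdd_assoc β, zero_twistedAdd β, twistedAdd_neg β,
    exists_twistedAdd_equiv_of_isAlt (B := β) (finrank_fin_fun _),
    exists_twistedAdd_equiv_of_not_isAlt (B := β) (finrank_fin_fun _) hβ⟩
end

section
/- Let m be a positive integer and let f : F_2^m → F_2. Define γ : F_2^m × F_2 → ℂ by γ(x,y) = i^{w(x)} (−1)^y, where w(x) is the Hamming weight of x. Then γ is a group homomorphism from (G, ∗) to ℂ^×, where G = F_2^m × F_2 has operation (x,y) ∗ (x',y') = (x+x', y+y'+⟨x,x'⟩) and ⟨·,·⟩ is the standard dot product over F_2. -/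
/-!
Coordinatewise, `(a + b).val + 2 (a b).val = a.val + b.val` on `ZMod 2`; summing gives
`w(x + x') + 2c = w(x) + w(x')`, where `c` counts the common ones of `x` and `x'`.
Hence `i^{w(x + x')} (-1)^c = i^{w(x + x')} i^{2c} = i^{w(x)} i^{w(x')}`, and `(-1)^c` is exactly the
sign contributed by the correction term `⟨x, x'⟩ ≡ c` in the product of `G`.
-/

open Finset

namespace ZMod

theorem val_add_add_two_mul_val_mul (a b : ZMod 2) :
    (a + b).val + 2 * (a * b).val = a.val + b.val := by
  revert a b; decide

theorem hammingNorm_eq_sum_val {ι : Type*} [Fintype ι] (x : ι → ZMod 2) :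
    hammingNorm x = ∑ i, (x i).val := by
  rw [hammingNorm, card_filter]
  refine sum_congr rfl fun i _ => ?_
  generalize x i = a
  revert a; decide

theorem hammingNorm_add_add_two_mul_sum_val_mul {ι : Type*} [Fintype ι] (x x' : ι → ZMod 2) :
    hammingNorm (x + x') + 2 * ∑ i, (x i * x' i).val = hammingNorm x + hammingNorm x' := by
  simp only [hammingNorm_eq_sum_val, mul_sum, ← sum_add_distrib, Pi.add_apply,
    val_add_add_two_mul_val_mul]

theorem neg_one_pow_val_of_natCast_eq {R : Type*} [Ring R] {a : ZMod 2} {n : ℕ}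
    (h : (n : ZMod 2) = a) : (-1 : R) ^ a.val = (-1) ^ n := by
  rw [← h, val_natCast, ← neg_one_pow_eq_pow_mod_two]

end ZMod

/-- The map `γ(x,y) = i^{w(x)} (−1)^y` is a group homomorphism from
`G = F_2^m × F_2` with operation `(x,y) ∗ (x',y') = (x+x', y+y'+⟨x,x'⟩)` to `ℂ^×`. -/
theorem gamma_is_homomorphism (m : ℕ) :
    let w : (Fin m → ZMod 2) → ℕ :=
      fun x => (Finset.univ.filter (fun i => x i ≠ 0)).card
    let γ : (Fin m → ZMod 2) × ZMod 2 → ℂ :=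
      fun p => Complex.I ^ (w p.1) * (-1 : ℂ) ^ (p.2.val)
    ∀ p q : (Fin m → ZMod 2) × ZMod 2,
      γ (p.1 + q.1, p.2 + q.2 + ∑ i, p.1 i * q.1 i) = γ p * γ q := by
  rintro w γ ⟨x, y⟩ ⟨x', y'⟩
  set c := ∑ i, (x i * x' i).val
  have hweight : w (x + x') + 2 * c = w x + w x' :=
    ZMod.hammingNorm_add_add_two_mul_sum_val_mul x x'
  have hsign : (-1 : ℂ) ^ (y + y' + ∑ i, x i * x' i).val = (-1) ^ (y.val + y'.val + c) :=
    ZMod.neg_one_pow_val_of_natCast_eq (by simp [c])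
  calc Complex.I ^ w (x + x') * (-1 : ℂ) ^ (y + y' + ∑ i, x i * x' i).val
      = Complex.I ^ (w (x + x') + 2 * c) * ((-1) ^ y.val * (-1) ^ y'.val) := by
        rw [hsign, pow_add (-1 : ℂ), pow_add Complex.I, pow_mul, Complex.I_sq]; ring
    _ = γ (x, y) * γ (x', y') := by
        rw [hweight, pow_add]; ring
end

section
/- Let f : F_2^m → F_2 and let R = {(x, f(x)) : x ∈ F_2^m} ⊆ G, where G = F_2^m × F_2 has operation (x,y) ∗ (x',y') = (x+x', y+y'+⟨x,x'⟩). Then R is a (2^m, 2, 2^m, 2^{m-1}) difference set in G relative to N = {0} × F_2 if and only if for every a ∈ F_2^m, |Σ_{x ∈ F_2^m} (−1)^{⟨x,a⟩ + f(x)} i^{w(x)}|² = 2^m, i.e., f is negabent. -/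
/-!
Expanding `|Σ_x (−1)^{⟨x,a⟩ + f x} i^{w x}|²` and substituting `x = y + d` gives
`Σ_d (−1)^{⟨d,a⟩} i^{w d} C(d)` with the nega-autocorrelation
`C(d) = Σ_y (−1)^{f (y+d) + f y + ⟨d,y⟩}`, because coordinatewise
`i^{w (y+d)} · conj (i^{w y}) = i^{w d} (−1)^{⟨d,y⟩}`. By Walsh–Hadamard inversion this is the
constant `2^m = i^{w 0} C(0)` for every `a` iff `C(d) = 0` for all `d ≠ 0`. On the other side,
the quotients `(x, f x) ∗ (y, f y)⁻¹ = (d, b)` correspond to the `y` with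
`f (y+d) + f y + ⟨d,y⟩ = b`, so `C(d) = 0` says exactly that both `(d, 0)` and `(d, 1)` are hit
`2^{m-1}` times, while `(0, 1)` is never hit.
-/

lemma ZMod.eq_zero_or_eq_one (u : ZMod 2) : u = 0 ∨ u = 1 := by
  revert u; decide

lemma ZMod.sum_univ_two {M : Type*} [AddCommMonoid M] (g : ZMod 2 → M) :
    ∑ b, g b = g 0 + g 1 :=
  Fin.sum_univ_two g

lemma AddChar.map_sum_eq_prod {ι A M : Type*} [AddCommMonoid A] [CommMonoid M]
    (ψ : AddChar A M) (s : Finset ι) (z : ι → A) :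
    ψ (∑ i ∈ s, z i) = ∏ i ∈ s, ψ (z i) := by
  classical
  induction s using Finset.induction_on with
  | empty => simp
  | insert j s hj ih =>
    rw [Finset.sum_insert hj, Finset.prod_insert hj, AddChar.map_add_eq_mul, ih]

namespace Negabent

open Finset ComplexConjugate

def signChar : AddChar (ZMod 2) ℂ where
  toFun u := (-1) ^ u.val
  map_zero_eq_one' := by simp
  map_add_eq_mul' u v := by
    rcases u.eq_zero_or_eq_one with rfl | rfl <;> rcases v.eq_zero_or_eq_one with rfl | rfl <;>
      simp [ZMod.val_one, show (1 + 1 : ZMod 2) = 0 from rfl]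

lemma signChar_apply (u : ZMod 2) : signChar u = (-1) ^ u.val := rfl

lemma signChar_eq_one_iff (u : ZMod 2) : signChar u = 1 ↔ u = 0 := by
  rcases u.eq_zero_or_eq_one with rfl | rfl <;> norm_num [signChar_apply, ZMod.val_one]

lemma signChar_mul_self (u : ZMod 2) : signChar u * signChar u = 1 := by
  rw [← AddChar.map_add_eq_mul, CharTwo.add_self_eq_zero, AddChar.map_zero_eq_one]

lemma conj_signChar (u : ZMod 2) : conj (signChar u) = signChar u := by
  simp [signChar_apply]

lemma I_pow_val_add_mul_conj (u v : ZMod 2) :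
    Complex.I ^ (u + v).val * conj (Complex.I ^ u.val) =
      Complex.I ^ v.val * signChar (v * u) := by
  rcases u.eq_zero_or_eq_one with rfl | rfl <;> rcases v.eq_zero_or_eq_one with rfl | rfl <;>
    simp [signChar_apply, ZMod.val_one, show (1 + 1 : ZMod 2) = 0 from rfl]

theorem sum_signChar_comp_eq_zero_iff {α : Type*} [Fintype α] (h : α → ZMod 2) {n : ℕ}
    (hα : Fintype.card α = 2 * n) :
    ∑ x, signChar (h x) = 0 ↔ ∀ b, #{x | h x = b} = n := by
  have hcard : #{x | h x = 0} + #{x | h x = 1} = Fintype.card α := by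
    rw [← ZMod.sum_univ_two (fun b => #{x | h x = b}), ← card_univ,
      card_eq_sum_card_fiberwise (f := h) (t := univ) (by simp)]
  have hsum : ∑ x, signChar (h x) = #{x | h x = 0} - #{x | h x = 1} := by
    rw [← sum_fiberwise' univ h, ZMod.sum_univ_two]
    simp [signChar_apply, ZMod.val_one, sub_eq_add_neg]
  rw [hsum, sub_eq_zero, Nat.cast_inj]
  constructor
  · intro hfibers b
    rcases b.eq_zero_or_eq_one with rfl | rfl <;> omega
  · intro hb
    rw [hb 0, hb 1]

variable {ι : Type*}

lemma add_self_mod_two (x : ι → ZMod 2) : x + x = 0 :=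
  funext fun i => CharTwo.add_self_eq_zero (x i)

lemma neg_eq_self_mod_two (x : ι → ZMod 2) : -x = x :=
  neg_eq_of_add_eq_zero_right (add_self_mod_two x)

lemma add_add_cancel_right_mod_two (x y : ι → ZMod 2) : x + y + y = x := by
  rw [add_assoc, add_self_mod_two, add_zero]

variable [Fintype ι]

lemma hammingNorm_eq_sum_val (x : ι → ZMod 2) : hammingNorm x = ∑ i, (x i).val := by
  rw [hammingNorm, card_filter]
  refine sum_congr rfl fun i _ => ?_
  rcases (x i).eq_zero_or_eq_one with h | h <;> simp [h, ZMod.val_one]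

lemma I_pow_hammingNorm_add_mul_conj (y d : ι → ZMod 2) :
    Complex.I ^ hammingNorm (y + d) * conj (Complex.I ^ hammingNorm y) =
      Complex.I ^ hammingNorm d * signChar (d ⬝ᵥ y) := by
  simp only [hammingNorm_eq_sum_val, ← prod_pow_eq_pow_sum, map_prod, dotProduct,
    AddChar.map_sum_eq_prod, ← prod_mul_distrib]
  exact prod_congr rfl fun i _ => I_pow_val_add_mul_conj (y i) (d i)

def heisMul (p q : (ι → ZMod 2) × ZMod 2) : (ι → ZMod 2) × ZMod 2 :=
  (p.1 + q.1, p.2 + q.2 + p.1 ⬝ᵥ q.1)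

def heisInv (p : (ι → ZMod 2) × ZMod 2) : (ι → ZMod 2) × ZMod 2 :=
  (-p.1, -p.2 + p.1 ⬝ᵥ p.1)

lemma heisMul_heisInv (x y : ι → ZMod 2) (s t : ZMod 2) :
    heisMul (x, s) (heisInv (y, t)) = (x + y, s + t + (x + y) ⬝ᵥ y) := by
  simp only [heisMul, heisInv, neg_eq_self_mod_two, ZMod.neg_eq_self_mod_two, add_dotProduct]
  congr 1
  ring

variable [DecidableEq ι]

noncomputable def walsh (g : (ι → ZMod 2) → ℂ) (a : ι → ZMod 2) : ℂ :=
  ∑ d, signChar (d ⬝ᵥ a) * g d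

lemma sum_signChar_dotProduct_of_ne_zero {d : ι → ZMod 2} (hd : d ≠ 0) :
    ∑ a, signChar (d ⬝ᵥ a) = 0 := by
  obtain ⟨j, hj⟩ := Function.ne_iff.mp hd
  have hflip : signChar (d ⬝ᵥ Pi.single j 1) ≠ 1 := by
    rwa [dotProduct_single, mul_one, Ne, signChar_eq_one_iff]
  refine eq_zero_of_mul_eq_self_left hflip ?_
  rw [mul_sum]
  exact Fintype.sum_equiv (Equiv.addLeft (Pi.single j 1)) _ _ fun a => by
    rw [Equiv.coe_addLeft, dotProduct_add, AddChar.map_add_eq_mul]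

theorem walsh_walsh (g : (ι → ZMod 2) → ℂ) (d₀ : ι → ZMod 2) :
    walsh (walsh g) d₀ = 2 ^ Fintype.card ι * g d₀ := by
  calc walsh (walsh g) d₀ = ∑ d, (∑ a, signChar ((d₀ + d) ⬝ᵥ a)) * g d := by
        simp_rw [walsh, mul_sum, dotProduct_comm _ d₀, add_dotProduct, AddChar.map_add_eq_mul,
          sum_mul]
        rw [sum_comm]
        simp_rw [mul_assoc]
    _ = 2 ^ Fintype.card ι * g d₀ := by
        rw [sum_eq_single d₀]
        · simp [CharTwo.add_self_eq_zero]
        · intro d _ hd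
          have hne : d₀ + d ≠ 0 := fun h =>
            hd ((eq_neg_of_add_eq_zero_right h).trans (neg_eq_self_mod_two d₀))
          rw [sum_signChar_dotProduct_of_ne_zero hne, zero_mul]
        · simp

theorem forall_walsh_eq_apply_zero_iff (g : (ι → ZMod 2) → ℂ) :
    (∀ a, walsh g a = g 0) ↔ ∀ d ≠ 0, g d = 0 := by
  constructor
  · intro h d hd
    have hzero : walsh (walsh g) d = 0 := by
      rw [walsh]
      simp_rw [h, ← sum_mul, dotProduct_comm _ d, sum_signChar_dotProduct_of_ne_zero hd, zero_mul]
    simpa [walsh_walsh] using hzero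
  · intro h a
    rw [walsh, sum_eq_single 0 (fun d _ hd => by rw [h d hd, mul_zero]) (by simp)]
    simp

noncomputable def negaHadamard (f : (ι → ZMod 2) → ZMod 2) (a : ι → ZMod 2) : ℂ :=
  ∑ x, signChar (x ⬝ᵥ a + f x) * Complex.I ^ hammingNorm x

noncomputable def negaAutocorr (f : (ι → ZMod 2) → ZMod 2) (d : ι → ZMod 2) : ℂ :=
  ∑ y, signChar (f (y + d) + f y + d ⬝ᵥ y)

lemma negaAutocorr_zero (f : (ι → ZMod 2) → ZMod 2) :
    negaAutocorr f 0 = 2 ^ Fintype.card ι := by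
  simp [negaAutocorr, CharTwo.add_self_eq_zero]

theorem sq_norm_negaHadamard (f : (ι → ZMod 2) → ZMod 2) (a : ι → ZMod 2) :
    (‖negaHadamard f a‖ ^ 2 : ℂ) =
      walsh (fun d => Complex.I ^ hammingNorm d * negaAutocorr f d) a := by
  have hterm (y d : ι → ZMod 2) :
      signChar ((y + d) ⬝ᵥ a + f (y + d)) * Complex.I ^ hammingNorm (y + d) *
          conj (signChar (y ⬝ᵥ a + f y) * Complex.I ^ hammingNorm y) =
        signChar (d ⬝ᵥ a) *
          (Complex.I ^ hammingNorm d * signChar (f (y + d) + f y + d ⬝ᵥ y)) := by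
    have he := I_pow_hammingNorm_add_mul_conj y d
    have hsq := signChar_mul_self (y ⬝ᵥ a)
    simp only [map_mul, conj_signChar, add_dotProduct, AddChar.map_add_eq_mul] at he ⊢
    linear_combination (signChar (d ⬝ᵥ a) * signChar (f (y + d)) * signChar (f y)) *
      (Complex.I ^ hammingNorm (y + d) * conj (Complex.I ^ hammingNorm y) * hsq + he)
  rw [← Complex.mul_conj', negaHadamard, map_sum, sum_mul_sum, sum_comm, walsh]
  simp_rw [negaAutocorr, mul_sum]
  conv_rhs => rw [sum_comm]
  exact sum_congr rfl fun y _ =>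
    (Equiv.sum_comp (Equiv.addLeft y) _).symm.trans (sum_congr rfl fun d _ => hterm y d)

theorem negabent_iff_negaAutocorr_eq_zero (f : (ι → ZMod 2) → ZMod 2) :
    (∀ a, ‖negaHadamard f a‖ ^ 2 = 2 ^ Fintype.card ι) ↔ ∀ d ≠ 0, negaAutocorr f d = 0 := by
  have hcast (a : ι → ZMod 2) : ‖negaHadamard f a‖ ^ 2 = 2 ^ Fintype.card ι ↔
      walsh (fun d => Complex.I ^ hammingNorm d * negaAutocorr f d) a =
        Complex.I ^ hammingNorm (0 : ι → ZMod 2) * negaAutocorr f 0 := by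
    rw [← sq_norm_negaHadamard, hammingNorm_zero, pow_zero, one_mul, negaAutocorr_zero]
    norm_cast
  simp_rw [hcast, forall_walsh_eq_apply_zero_iff, mul_eq_zero, pow_eq_zero_iff',
    Complex.I_ne_zero, false_and, false_or]

lemma negaAutocorr_eq_zero_iff (f : (ι → ZMod 2) → ZMod 2) {d : ι → ZMod 2} (hd : d ≠ 0) :
    negaAutocorr f d = 0 ↔
      ∀ b, #{y | f (y + d) + f y + d ⬝ᵥ y = b} = 2 ^ (Fintype.card ι - 1) := by
  obtain ⟨j, -⟩ := Function.ne_iff.mp hd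
  refine sum_signChar_comp_eq_zero_iff _ ?_
  rw [Fintype.card_fun, ZMod.card, ← pow_succ',
    Nat.sub_add_cancel (Fintype.card_pos_iff.mpr ⟨j⟩)]

def graph (f : (ι → ZMod 2) → ZMod 2) : Finset ((ι → ZMod 2) × ZMod 2) :=
  univ.image fun x => (x, f x)

lemma mem_graph {f : (ι → ZMod 2) → ZMod 2} {p : (ι → ZMod 2) × ZMod 2} :
    p ∈ graph f ↔ f p.1 = p.2 := by
  simp [graph, Prod.ext_iff, eq_comm]

lemma card_graph (f : (ι → ZMod 2) → ZMod 2) : #(graph f) = 2 ^ Fintype.card ι := by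
  rw [graph, card_image_of_injective _ fun x y h => congrArg Prod.fst h]
  simp

theorem card_filter_heisMul_heisInv_eq (f : (ι → ZMod 2) → ZMod 2)
    (g : (ι → ZMod 2) × ZMod 2) :
    #{pr ∈ graph f ×ˢ graph f | heisMul pr.1 (heisInv pr.2) = g} =
      #{y | f (y + g.1) + f y + g.1 ⬝ᵥ y = g.2} := by
  obtain ⟨d, b⟩ := g
  have hsolve (x y : ι → ZMod 2) : y + (x + y) = x := by
    rw [add_comm, add_add_cancel_right_mod_two]
  refine card_nbij' (fun pr => pr.2.1) (fun y => ((y + d, f (y + d)), (y, f y)))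
    ?_ ?_ ?_ fun _ _ => rfl
  · rintro ⟨⟨x, s⟩, ⟨y, t⟩⟩ hpr
    simp only [mem_coe, mem_filter, mem_product, mem_graph, heisMul_heisInv,
      Prod.mk.injEq] at hpr
    obtain ⟨⟨rfl, rfl⟩, rfl, rfl⟩ := hpr
    simp [hsolve]
  · intro y hy
    simp only [mem_coe, mem_filter, mem_univ, true_and] at hy
    simp only [mem_coe, mem_filter, mem_product, mem_graph, heisMul_heisInv,
      add_right_comm y d y, add_self_mod_two, zero_add, hy, and_self]
  · rintro ⟨⟨x, s⟩, ⟨y, t⟩⟩ hpr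
    simp only [mem_coe, mem_filter, mem_product, mem_graph, heisMul_heisInv,
      Prod.mk.injEq] at hpr
    obtain ⟨⟨rfl, rfl⟩, rfl, rfl⟩ := hpr
    simp [hsolve]

end Negabent

open scoped Classical in
/-- For `f : F_2^m → F_2` and `R = {(x, f x)} ⊆ G`, where `G = F_2^m × F_2` carries the
operation `(x,y) ∗ (x',y') = (x+x', y+y'+⟨x,x'⟩)`, the set `R` is a
`(2^m, 2, 2^m, 2^{m-1})` difference set relative to `N = {0} × F_2` if and only if `f` is
negabent: `|Σ_x (−1)^{⟨x,a⟩+f(x)} i^{w(x)}|² = 2^m` for every `a`. -/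
theorem rds_iff_negabent (m : ℕ) (f : (Fin m → ZMod 2) → ZMod 2) :
    let B : (Fin m → ZMod 2) → (Fin m → ZMod 2) → ZMod 2 :=
      fun x y => ∑ i, x i * y i
    let star : (Fin m → ZMod 2) × ZMod 2 → (Fin m → ZMod 2) × ZMod 2 →
        (Fin m → ZMod 2) × ZMod 2 :=
      fun p q => (p.1 + q.1, p.2 + q.2 + B p.1 q.1)
    let inv : (Fin m → ZMod 2) × ZMod 2 → (Fin m → ZMod 2) × ZMod 2 :=
      fun p => (-p.1, -p.2 + B p.1 p.1)
    let w : (Fin m → ZMod 2) → ℕ :=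
      fun x => (Finset.univ.filter (fun i => x i ≠ 0)).card
    let R : Finset ((Fin m → ZMod 2) × ZMod 2) :=
      Finset.univ.image (fun x : Fin m → ZMod 2 => (x, f x))
    (R.card = 2 ^ m ∧
      (∀ g : (Fin m → ZMod 2) × ZMod 2, g.1 ≠ 0 →
        ((R ×ˢ R).filter (fun pr => star pr.1 (inv pr.2) = g)).card = 2 ^ (m - 1)) ∧
      ((R ×ˢ R).filter
        (fun pr => star pr.1 (inv pr.2) = ((0 : Fin m → ZMod 2), (1 : ZMod 2)))).card
          = 0) ↔
    (∀ a : Fin m → ZMod 2,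
      ‖∑ x : Fin m → ZMod 2,
        (-1 : ℂ) ^ ((B x a + f x).val) * Complex.I ^ (w x)‖ ^ 2 = 2 ^ m) := by
  intro B star inv w R
  have hR : R.card = 2 ^ m := (Negabent.card_graph f).trans (by rw [Fintype.card_fin])
  have hcount (g : (Fin m → ZMod 2) × ZMod 2) :
      ((R ×ˢ R).filter (fun pr => star pr.1 (inv pr.2) = g)).card =
        (Finset.univ.filter fun y => f (y + g.1) + f y + g.1 ⬝ᵥ y = g.2).card :=
    Negabent.card_filter_heisMul_heisInv_eq f g
  have hfibers (d : Fin m → ZMod 2) (hd : d ≠ 0) :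
      (∀ b, (Finset.univ.filter fun y => f (y + d) + f y + d ⬝ᵥ y = b).card = 2 ^ (m - 1)) ↔
        Negabent.negaAutocorr f d = 0 := by
    simpa using (Negabent.negaAutocorr_eq_zero_iff f hd).symm
  have hnega : (∀ a, ‖Negabent.negaHadamard f a‖ ^ 2 = 2 ^ m) ↔
      ∀ d ≠ 0, Negabent.negaAutocorr f d = 0 := by
    simpa using Negabent.negabent_iff_negaAutocorr_eq_zero f
  change _ ↔ ∀ a, ‖Negabent.negaHadamard f a‖ ^ 2 = 2 ^ m
  simp only [hR, hcount, hnega, true_and, Prod.forall, add_zero, zero_dotProduct,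
    CharTwo.add_self_eq_zero, zero_ne_one, Finset.filter_false, Finset.card_empty, and_true]
  exact forall_congr' fun d =>
    ⟨fun h hd => (hfibers d hd).1 (h · hd), fun h b hd => (hfibers d hd).2 (h hd) b⟩
end
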